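/- arXiv:2107.11341 — 8 statements merged into one kernel-verified Lean document; each statement's English description precedes it below -/
import Mathlib

section
/- Let n ≥ 1 and 0 ≤ m ≤ n be integers, τ > 0 a real number, and a₀,…,a_{n−1}, b₀,…,b_m real coefficients such that not all b_k are zero. Then every complex root s₀ of the quasipolynomial Δ(s) = s^n + Σ_{k=0}^{n−1} a_k s^k + e^{−sτ} Σ_{k=0}^{m} b_k s^k has multiplicity at most n + m + 1; that is, it is impossible that Δ^{(k)}(s₀) = 0 for all 0 ≤ k ≤ n + m + 1. -/
/-!
Write `Δ(s) = P(s) + e^{cs} Q(s)` with `c = -τ`, `deg P = n`, `deg Q ≤ m` and `Q ≠ 0`. Since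
`(e^{cs} q(s))' = e^{cs} (q' + c q)(s)`, the `k`-th derivative of `Δ` is
`P^{(k)}(s) + e^{cs} (L^k Q)(s)` with `L = d/ds + c`. For `k > n` the polynomial part is gone, so a
root of multiplicity `n + m + 2` makes `L^i R` vanish at `s₀` for `i ≤ m`, where `R = L^{n+1} Q`.
As `d/ds = L - c`, all derivatives of `R` up to order `m` then vanish at `s₀`; since `deg R ≤ m`,
`R = 0`. But `L` preserves degrees when `c ≠ 0`, so `R ≠ 0`.
-/

open Polynomial

namespace Polynomial

variable {R : Type*}

noncomputable def twistedDerivative [Semiring R] (c : R) (p : R[X]) : R[X] :=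
  derivative p + C c * p

theorem degree_twistedDerivative [Semiring R] [NoZeroDivisors R] {c : R} (hc : c ≠ 0) (p : R[X]) :
    (twistedDerivative c p).degree = p.degree := by
  rcases eq_or_ne p 0 with rfl | hp
  · simp [twistedDerivative]
  rw [twistedDerivative, add_comm, degree_add_eq_left_of_degree_lt, degree_C_mul hc]
  exact (degree_C_mul hc).symm ▸ degree_derivative_lt hp

theorem degree_iterate_twistedDerivative [Semiring R] [NoZeroDivisors R] {c : R} (hc : c ≠ 0)
    (p : R[X]) (k : ℕ) : ((twistedDerivative c)^[k] p).degree = p.degree := by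
  induction k with
  | zero => rfl
  | succ k ih => rw [Function.iterate_succ_apply', degree_twistedDerivative hc, ih]

theorem eval_iterate_derivative_iterate_twistedDerivative_eq_zero [CommRing R] {c t : R}
    {p : R[X]} {m : ℕ} (h : ∀ i ≤ m, ((twistedDerivative c)^[i] p).eval t = 0) :
    ∀ j i, i + j ≤ m → (derivative^[j] ((twistedDerivative c)^[i] p)).eval t = 0 := by
  intro j
  induction j with
  | zero => intro i hi; exact h i (by omega)
  | succ j ih =>
    intro i hi
    have hD : derivative ((twistedDerivative c)^[i] p) =
        (twistedDerivative c)^[i + 1] p - C c * (twistedDerivative c)^[i] p := by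
      rw [Function.iterate_succ_apply', twistedDerivative, add_sub_cancel_right]
    rw [Function.iterate_succ_apply, hD, iterate_derivative_sub, iterate_derivative_C_mul,
      eval_sub, eval_mul, ih (i + 1) (by omega), ih i (by omega), mul_zero, sub_zero]

theorem eq_zero_of_eval_iterate_twistedDerivative_eq_zero [CommRing R] [IsDomain R]
    [CharZero R] {c t : R} {p : R[X]} {m : ℕ} (hdeg : p.natDegree ≤ m)
    (h : ∀ i ≤ m, ((twistedDerivative c)^[i] p).eval t = 0) : p = 0 := by
  classical
  by_contra hp
  have hroot : m < p.rootMultiplicity t :=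
    (lt_rootMultiplicity_iff_isRoot_iterate_derivative hp).2 fun j hj ↦
      eval_iterate_derivative_iterate_twistedDerivative_eq_zero h j 0 (by omega)
  have hle : p.rootMultiplicity t ≤ p.natDegree :=
    (count_roots p).symm.le.trans ((Multiset.count_le_card _ _).trans (card_roots' p))
  omega

theorem sum_fin_C_mul_X_pow_ne_zero [Semiring R] {n : ℕ} {f : Fin n → R} (hf : ∃ k, f k ≠ 0) :
    ∑ i : Fin n, C (f i) * X ^ (i : ℕ) ≠ 0 := by
  obtain ⟨k, hk⟩ := hf
  intro h
  have hcoeff : (∑ i : Fin n, C (f i) * X ^ (i : ℕ)).coeff k = f k := by simp [Fin.val_inj]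
  rw [h, coeff_zero] at hcoeff
  exact hk hcoeff.symm

theorem natDegree_sum_fin_C_mul_X_pow_le [Semiring R] {n : ℕ} (f : Fin (n + 1) → R) :
    (∑ i : Fin (n + 1), C (f i) * X ^ (i : ℕ)).natDegree ≤ n := by
  rcases eq_or_ne (∑ i : Fin (n + 1), C (f i) * X ^ (i : ℕ)) 0 with h | h
  · simp [h]
  rw [← Nat.lt_succ_iff, natDegree_lt_iff_degree_lt h]
  exact degree_sum_fin_lt f

theorem hasDerivAt_exp_mul_eval (c : ℂ) (p : ℂ[X]) (s : ℂ) :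
    HasDerivAt (fun s ↦ Complex.exp (c * s) * p.eval s)
      (Complex.exp (c * s) * (twistedDerivative c p).eval s) s := by
  refine (((hasDerivAt_id' s).const_mul c).cexp.mul (p.hasDerivAt s)).congr_deriv ?_
  simp only [twistedDerivative, eval_add, eval_mul, eval_C]
  ring

theorem iteratedDeriv_eval_add_exp_mul_eval (c : ℂ) (P Q : ℂ[X]) (k : ℕ) :
    iteratedDeriv k (fun s ↦ P.eval s + Complex.exp (c * s) * Q.eval s) =
      fun s ↦ (derivative^[k] P).eval s +
        Complex.exp (c * s) * ((twistedDerivative c)^[k] Q).eval s := by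
  induction k generalizing P Q with
  | zero => rfl
  | succ k ih =>
    have hderiv : deriv (fun s ↦ P.eval s + Complex.exp (c * s) * Q.eval s) =
        fun s ↦ (derivative P).eval s + Complex.exp (c * s) * (twistedDerivative c Q).eval s :=
      _root_.funext fun s ↦ ((P.hasDerivAt s).add (hasDerivAt_exp_mul_eval c Q s)).deriv
    rw [iteratedDeriv_succ', hderiv, ih]
    rfl

theorem eval_iterate_twistedDerivative_eq_zero_of_iteratedDeriv_eq_zero {c s₀ : ℂ} {P Q : ℂ[X]}
    {k : ℕ} (hk : P.natDegree < k)
    (h : iteratedDeriv k (fun s ↦ P.eval s + Complex.exp (c * s) * Q.eval s) s₀ = 0) :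
    ((twistedDerivative c)^[k] Q).eval s₀ = 0 := by
  simpa [iteratedDeriv_eval_add_exp_mul_eval, iterate_derivative_eq_zero hk,
    Complex.exp_ne_zero] using h

end Polynomial

theorem quasipolynomial_multiplicity_le_general (n m : ℕ)
    (τ : ℝ) (hτ : 0 < τ) (a : Fin n → ℝ) (b : Fin (m + 1) → ℝ)
    (hb : ∃ k, b k ≠ 0) (s₀ : ℂ) :
    ¬ (∀ k ≤ n + m + 1,
        iteratedDeriv k
          (fun s : ℂ => s ^ n + (∑ k : Fin n, (a k : ℂ) * s ^ (k : ℕ)) +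
            Complex.exp (-s * τ) * ∑ k : Fin (m + 1), (b k : ℂ) * s ^ (k : ℕ))
          s₀ = 0) := by
  intro h
  set P : ℂ[X] := X ^ n + ∑ k : Fin n, C (a k : ℂ) * X ^ (k : ℕ)
  set Q : ℂ[X] := ∑ k : Fin (m + 1), C (b k : ℂ) * X ^ (k : ℕ)
  set L := twistedDerivative (-τ : ℂ)
  have hΔ : (fun s : ℂ => s ^ n + (∑ k : Fin n, (a k : ℂ) * s ^ (k : ℕ)) +
      Complex.exp (-s * τ) * ∑ k : Fin (m + 1), (b k : ℂ) * s ^ (k : ℕ)) =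
      fun s ↦ P.eval s + Complex.exp (-τ * s) * Q.eval s := by
    ext s
    simp only [P, Q, eval_add, eval_pow, eval_X, eval_finsetSum, eval_mul, eval_C]
    ring_nf
  have hPdeg : P.natDegree ≤ n :=
    (natDegree_add_le _ _).trans <| max_le (natDegree_X_pow_le n) <|
      natDegree_le_of_degree_le (degree_sum_fin_lt _).le
  have hQ : Q ≠ 0 := sum_fin_C_mul_X_pow_ne_zero (by exact_mod_cast hb)
  have hRdeg : (L^[n + 1] Q).degree = Q.degree :=
    degree_iterate_twistedDerivative (neg_ne_zero.2 (Complex.ofReal_ne_zero.2 hτ.ne')) Q _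
  have hR : L^[n + 1] Q = 0 := by
    refine eq_zero_of_eval_iterate_twistedDerivative_eq_zero (c := -(τ : ℂ)) (t := s₀)
      ((natDegree_eq_of_degree_eq hRdeg).trans_le (natDegree_sum_fin_C_mul_X_pow_le _))
      fun i hi ↦ ?_
    rw [← Function.iterate_add_apply, add_comm]
    exact eval_iterate_twistedDerivative_eq_zero_of_iteratedDeriv_eq_zero (by omega)
      (hΔ ▸ h (n + 1 + i) (by omega))
  exact hQ (by rw [← degree_eq_bot, ← hRdeg, hR, degree_zero])

/-- Any complex root of the quasipolynomial
`Δ(s) = s^n + Σ_{k<n} a_k s^k + e^{-sτ} Σ_{k≤m} b_k s^k` (with not all `b_k`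
zero) has multiplicity at most `n + m + 1`: it is impossible that all
derivatives of order `0, …, n + m + 1` vanish at the root. -/
theorem quasipolynomial_multiplicity_le (n m : ℕ) (hn : 1 ≤ n) (hm : m ≤ n)
    (τ : ℝ) (hτ : 0 < τ) (a : Fin n → ℝ) (b : Fin (m + 1) → ℝ)
    (hb : ∃ k, b k ≠ 0) (s₀ : ℂ) :
    ¬ (∀ k ≤ n + m + 1,
        iteratedDeriv k
          (fun s : ℂ => s ^ n + (∑ k : Fin n, (a k : ℂ) * s ^ (k : ℕ)) +
            Complex.exp (-s * τ) * ∑ k : Fin (m + 1), (b k : ℂ) * s ^ (k : ℕ))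
          s₀ = 0) :=
  quasipolynomial_multiplicity_le_general n m τ hτ a b hb s₀
end

section
/- Let n ≥ 1 and 0 ≤ m ≤ n be integers, τ > 0 a real number, and a₀,…,a_{n−1}, b₀,…,b_m real coefficients such that at least one b_k is nonzero. Then the quasipolynomial Δ(s) = s^n + Σ_{k=0}^{n−1} a_k s^k + e^{−sτ} Σ_{k=0}^{m} b_k s^k has infinitely many roots in the complex plane. -/
/-!
Write `Δ(s) = P(s) + e^{-sτ} Q(s)` with polynomials `P, Q ≠ 0`. For `ω` on the lattice
`(2πi/τ)ℕ`, where `e^{-ωτ} = 1`, put `c = ω - log(-P(ω)/Q(ω))/τ`, so that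
`e^{-cτ} = -P(ω)/Q(ω)`. Since `P(z)/Q(z)` behaves like a power of `z` at infinity,
`log(P(ω)/Q(ω)) = o(ω)`, hence `c/ω → 1`, and on a disc of fixed radius `r = 1/(2|τ|)` around `c`
the ratio `(P(ω)/Q(ω)) / (P(z)/Q(z))` tends to `1` uniformly. There `Δ/P` is uniformly close to
`w ↦ 1 - e^{-wτ}`, which vanishes at the centre and is bounded below on the circle, so by the
minimum modulus principle `Δ` has a zero in every such disc. These discs escape to infinity.
-/

open Polynomial Filter Bornology Topology Metric Set Asymptotics Complex

theorem DiffContOnCl.exists_mem_ball_eq_zero_of_norm_lt {f : ℂ → ℂ} {z₀ : ℂ} {r : ℝ}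
    (hf : DiffContOnCl ℂ f (ball z₀ r)) (hr : 0 < r)
    (hlt : ∀ z ∈ sphere z₀ r, ‖f z₀‖ < ‖f z‖) : ∃ z ∈ ball z₀ r, f z = 0 := by
  have hcont : ContinuousOn f (closedBall z₀ r) := closure_ball z₀ hr.ne' ▸ hf.continuousOn
  obtain ⟨z, hz, hmin⟩ := exists_isLocalMin_mem_ball hcont.norm (mem_closedBall_self hr.le) hlt
  refine ⟨z, hz, (eventually_eq_or_eq_zero_of_isLocalMin_norm ?_ hmin).resolve_left ?_⟩
  · exact hf.differentiableOn.eventually_differentiableAt (isOpen_ball.mem_nhds hz)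
  · intro hconst
    have hball : EqOn f (fun _ ↦ f z) (ball z₀ r) :=
      (hf.differentiableOn.analyticOnNhd isOpen_ball).eqOn_of_preconnected_of_eventuallyEq
        analyticOnNhd_const (convex_ball z₀ r).isPreconnected hz hconst
    have hclosed : EqOn f (fun _ ↦ f z) (closedBall z₀ r) :=
      hball.of_subset_closure hcont continuousOn_const ball_subset_closedBall
        (closure_ball z₀ hr.ne').ge
    obtain ⟨w, hw⟩ := (NormedSpace.sphere_nonempty (x := z₀)).mpr hr.le
    have := hlt w hw
    rw [hclosed (sphere_subset_closedBall hw), hclosed (mem_closedBall_self hr.le)] at this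
    exact this.false

theorem DiffContOnCl.exists_mem_ball_eq_zero_of_norm_sub_lt {f g : ℂ → ℂ} {z₀ : ℂ} {r m : ℝ}
    (hf : DiffContOnCl ℂ f (ball z₀ r)) (hr : 0 < r) (hg₀ : g z₀ = 0)
    (hg : ∀ z ∈ sphere z₀ r, m ≤ ‖g z‖) (hfg : ∀ z ∈ closedBall z₀ r, ‖f z - g z‖ < m / 2) :
    ∃ z ∈ ball z₀ r, f z = 0 := by
  refine hf.exists_mem_ball_eq_zero_of_norm_lt hr fun z hz ↦ ?_
  have h₀ := hfg z₀ (mem_closedBall_self hr.le)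
  rw [hg₀, sub_zero] at h₀
  have hz' := hfg z (sphere_subset_closedBall hz)
  linarith [hg z hz, norm_sub_norm_le (g z) (f z), norm_sub_rev (f z) (g z)]

theorem tendsto_mul_cobounded_prod_nhds_one {𝕜 : Type*} [NormedDivisionRing 𝕜] :
    Tendsto (fun x : 𝕜 × 𝕜 ↦ x.1 * x.2) (cobounded 𝕜 ×ˢ 𝓝 1) (cobounded 𝕜) := by
  rw [← tendsto_norm_atTop_iff_cobounded]
  simp only [norm_mul]
  refine Tendsto.atTop_mul_pos one_pos ?_ ?_
  · exact tendsto_norm_cobounded_atTop.comp tendsto_fst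
  · simpa using (tendsto_snd (f := cobounded 𝕜) (g := 𝓝 (1 : 𝕜))).norm

namespace Polynomial

variable {𝕜 : Type*} [NormedField 𝕜]

theorem eval_div_pow_natDegree {x : 𝕜} (hx : x ≠ 0) (p : 𝕜[X]) :
    p.eval x / x ^ p.natDegree = p.reverse.eval x⁻¹ := by
  let := invertibleOfNonzero hx
  rw [div_eq_iff (pow_ne_zero _ hx), ← invOf_eq_inv, eval, eval, eval₂_reverse_mul_pow]

theorem tendsto_eval_div_pow_natDegree_cobounded (p : 𝕜[X]) :
    Tendsto (fun z ↦ p.eval z / z ^ p.natDegree) (cobounded 𝕜) (𝓝 p.leadingCoeff) := by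
  have h := (p.reverse.continuous.tendsto 0).comp (tendsto_inv₀_cobounded (α := 𝕜))
  rw [← coeff_zero_eq_eval_zero, coeff_zero_reverse] at h
  exact h.congr' <| (eventually_ne_cobounded 0).mono fun z hz ↦ (eval_div_pow_natDegree hz p).symm

theorem eventually_eval_ne_zero_cobounded {p : 𝕜[X]} (hp : p ≠ 0) :
    ∀ᶠ z in cobounded 𝕜, p.eval z ≠ 0 :=
  ((p.tendsto_eval_div_pow_natDegree_cobounded).eventually_ne (leadingCoeff_ne_zero.2 hp)).mono
    fun _ hz h ↦ hz (by rw [h, zero_div])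

theorem tendsto_eval_mul_div_eval {p : 𝕜[X]} (hp : p ≠ 0) :
    Tendsto (fun x : 𝕜 × 𝕜 ↦ p.eval (x.1 * x.2) / p.eval x.1) (cobounded 𝕜 ×ˢ 𝓝 1) (𝓝 1) := by
  have hlc : p.leadingCoeff ≠ 0 := leadingCoeff_ne_zero.2 hp
  have hlim := p.tendsto_eval_div_pow_natDegree_cobounded
  have h := ((hlim.comp tendsto_mul_cobounded_prod_nhds_one).div (hlim.comp tendsto_fst) hlc).mul
    (((continuous_pow p.natDegree).tendsto (1 : 𝕜)).comp tendsto_snd)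
  rw [div_self hlc, one_pow, one_mul] at h
  refine h.congr' ?_
  filter_upwards [(eventually_ne_cobounded 0).prod_mk (eventually_ne_nhds one_ne_zero)]
    with ⟨z, u⟩ ⟨hz, hu⟩
  simp only [Function.comp_apply, Pi.div_apply, mul_pow]
  field_simp

theorem isLittleO_log_norm_eval {p : 𝕜[X]} (hp : p ≠ 0) :
    (fun z ↦ Real.log ‖p.eval z‖) =o[cobounded 𝕜] (‖·‖) := by
  have hnorm : Tendsto (‖·‖) (cobounded 𝕜) atTop := tendsto_norm_cobounded_atTop
  have hlead : (fun z ↦ Real.log ‖p.eval z / z ^ p.natDegree‖) =o[cobounded 𝕜] (‖·‖) :=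
    ((((p.tendsto_eval_div_pow_natDegree_cobounded).norm).log
      (norm_ne_zero_iff.2 (leadingCoeff_ne_zero.2 hp))).isBigO_one ℝ).trans_isLittleO
      ((isLittleO_one_left_iff ℝ).2 (by simpa using hnorm))
  have hpow : (fun z : 𝕜 ↦ p.natDegree * Real.log ‖z‖) =o[cobounded 𝕜] (‖·‖) :=
    (Real.isLittleO_log_id_atTop.comp_tendsto hnorm).const_mul_left _
  refine (hlead.add hpow).congr' ?_ EventuallyEq.rfl
  filter_upwards [eventually_ne_cobounded 0, eventually_eval_ne_zero_cobounded hp] with z hz hpz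
  rw [norm_div, norm_pow, Real.log_div (norm_ne_zero_iff.2 hpz) (by positivity), Real.log_pow]
  ring

end Polynomial

theorem Complex.norm_log_le (x : ℂ) : ‖log x‖ ≤ |Real.log ‖x‖| + Real.pi :=
  (norm_le_abs_re_add_abs_im _).trans <| by rw [log_re, log_im]; grw [abs_arg_le_pi]

theorem isLittleO_log_neg_eval_div_eval {P Q : ℂ[X]} (hP : P ≠ 0) (hQ : Q ≠ 0) :
    (fun z ↦ log (-(P.eval z / Q.eval z))) =o[cobounded ℂ] id := by
  have hpi : (fun _ ↦ Real.pi) =o[cobounded ℂ] (‖·‖) := isLittleO_const_left.2 <| Or.inr <| by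
    simpa [Function.comp_def] using tendsto_norm_cobounded_atTop (E := ℂ)
  refine isLittleO_norm_right.1 <| IsBigO.trans_isLittleO ?_
    (((isLittleO_log_norm_eval hP).sub (isLittleO_log_norm_eval hQ)).norm_left.add hpi)
  refine IsBigO.of_bound' ?_
  filter_upwards [eventually_eval_ne_zero_cobounded hP, eventually_eval_ne_zero_cobounded hQ]
    with z hPz hQz
  rw [Real.norm_of_nonneg (by positivity), Real.norm_eq_abs, ← Real.log_div
    (norm_ne_zero_iff.2 hPz) (norm_ne_zero_iff.2 hQz), ← norm_div]
  simpa only [norm_neg] using norm_log_le (-(P.eval z / Q.eval z))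

theorem Complex.norm_exp_le_two {x : ℂ} (hx : ‖x‖ ≤ 1 / 2) : ‖exp x‖ ≤ 2 := by
  have := norm_exp_sub_one_le (hx.trans (by norm_num))
  linarith [norm_le_norm_sub_add (exp x) 1, norm_one (α := ℂ)]

theorem Complex.quarter_le_norm_one_sub_exp {x : ℂ} (hx : ‖x‖ = 1 / 2) : 1 / 4 ≤ ‖1 - exp x‖ := by
  have := norm_exp_sub_one_sub_id_le (x := x) (by rw [hx]; norm_num)
  rw [hx] at this
  linarith [norm_sub_norm_le x (exp x - 1), norm_sub_rev x (exp x - 1), norm_sub_rev 1 (exp x)]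

theorem exists_mem_ball_add_exp_mul_eq_zero {p q : ℂ → ℂ} (hp : Differentiable ℂ p)
    (hq : Differentiable ℂ q) {τ c a : ℂ} (hτ : τ ≠ 0) (hc : exp (-c * τ) = -a)
    (ha : ∀ w ∈ closedBall (0 : ℂ) (1 / (2 * ‖τ‖)), ‖a / (p (c + w) / q (c + w)) - 1‖ < 1 / 20) :
    ∃ w ∈ ball (0 : ℂ) (1 / (2 * ‖τ‖)), p (c + w) + exp (-(c + w) * τ) * q (c + w) = 0 := by
  set r := 1 / (2 * ‖τ‖)
  have hr : 0 < r := by positivity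
  have hrτ : r * ‖τ‖ = 1 / 2 := by simp only [r]; field_simp
  have hwτ : ∀ w ∈ closedBall (0 : ℂ) r, ‖-w * τ‖ ≤ 1 / 2 := fun w hw ↦ by
    rw [norm_mul, norm_neg, ← hrτ]
    gcongr
    simpa using hw
  have hp0 : ∀ w ∈ closedBall (0 : ℂ) r, p (c + w) ≠ 0 := fun w hw h ↦ by
    have := ha w hw
    norm_num [h] at this
  set f := fun w ↦ (p (c + w) + exp (-(c + w) * τ) * q (c + w)) / p (c + w)
  have hf : DiffContOnCl ℂ f (ball 0 r) := by
    refine DifferentiableOn.diffContOnCl_ball (U := closedBall 0 r) ?_ subset_rfl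
    refine DifferentiableOn.div ?_ ?_ hp0 <;> fun_prop
  have hsphere : ∀ w ∈ sphere (0 : ℂ) r, 1 / 4 ≤ ‖1 - exp (-w * τ)‖ := fun w hw ↦
    quarter_le_norm_one_sub_exp <| by rw [norm_mul, norm_neg, mem_sphere_zero_iff_norm.1 hw, hrτ]
  have hclose : ∀ w ∈ closedBall (0 : ℂ) r, ‖f w - (1 - exp (-w * τ))‖ < 1 / 4 / 2 := by
    intro w hw
    have hfg : f w - (1 - exp (-w * τ)) = exp (-w * τ) * -(a / (p (c + w) / q (c + w)) - 1) := by
      have h1 : exp (-(c + w) * τ) = -a * exp (-w * τ) := by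
        rw [← hc, ← exp_add]; ring_nf
      simp only [f, h1, div_div_eq_mul_div]
      field_simp [hp0 w hw]
      ring
    rw [hfg, norm_mul, norm_neg]
    calc ‖exp (-w * τ)‖ * ‖a / (p (c + w) / q (c + w)) - 1‖ ≤ 2 * (1 / 20) := by
          gcongr
          exacts [norm_exp_le_two (hwτ w hw), (ha w hw).le]
      _ < 1 / 4 / 2 := by norm_num
  obtain ⟨w, hw, hfw⟩ := hf.exists_mem_ball_eq_zero_of_norm_sub_lt hr (by simp) hsphere hclose
  exact ⟨w, hw, (div_eq_zero_iff.1 hfw).resolve_right (hp0 w (ball_subset_closedBall hw))⟩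

section DelayRoots

variable {P Q : ℂ[X]} {τ : ℂ}

noncomputable def rootCenter (P Q : ℂ[X]) (τ ω : ℂ) : ℂ :=
  ω - log (-(P.eval ω / Q.eval ω)) / τ

theorem exp_neg_rootCenter_mul (hτ : τ ≠ 0) {ω : ℂ} (hP : P.eval ω ≠ 0) (hQ : Q.eval ω ≠ 0) :
    exp (-rootCenter P Q τ ω * τ) = exp (-ω * τ) * -(P.eval ω / Q.eval ω) := by
  have hne : -(P.eval ω / Q.eval ω) ≠ 0 := neg_ne_zero.2 (div_ne_zero hP hQ)
  rw [rootCenter, neg_sub, sub_mul, div_mul_cancel₀ _ hτ, sub_eq_add_neg, exp_add, exp_log hne,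
    neg_mul ω τ, mul_comm]

theorem tendsto_rootCenter_div (hP : P ≠ 0) (hQ : Q ≠ 0) :
    Tendsto (fun ω ↦ rootCenter P Q τ ω / ω) (cobounded ℂ) (𝓝 1) := by
  have h := ((isLittleO_log_neg_eval_div_eval hP hQ).tendsto_div_nhds_zero.div_const τ).const_sub 1
  rw [zero_div, sub_zero] at h
  refine h.congr' <| (eventually_ne_cobounded 0).mono fun ω hω ↦ ?_
  simp only [rootCenter, id, sub_div, div_self hω, div_right_comm]

variable {ι : Type*} {l : Filter ι} {ω : ι → ℂ} {K : Set ℂ}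

theorem tendsto_rootCenter_add_div (hω : Tendsto ω l (cobounded ℂ)) (hP : P ≠ 0) (hQ : Q ≠ 0)
    (hK : IsBounded K) :
    Tendsto (fun x : ι × ℂ ↦ (ω x.1, (rootCenter P Q τ (ω x.1) + x.2) / ω x.1)) (l ×ˢ 𝓟 K)
      (cobounded ℂ ×ˢ 𝓝 1) := by
  obtain ⟨C, hC⟩ := hK.exists_norm_le
  have hbdd : IsBoundedUnder (· ≤ ·) (l ×ˢ 𝓟 K) (fun x : ι × ℂ ↦ ‖x.2‖) :=
    isBoundedUnder_of_eventually_le (a := C) <|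
      eventually_prod_principal_iff.2 (Eventually.of_forall fun _ w hw ↦ hC w hw)
  have hsmall := (tendsto_inv₀_cobounded.comp (hω.comp tendsto_fst)).zero_mul_isBoundedUnder_le hbdd
  have h := ((tendsto_rootCenter_div (τ := τ) hP hQ).comp (hω.comp tendsto_fst)).add hsmall
  rw [add_zero] at h
  refine (hω.comp tendsto_fst).prodMk (h.congr fun x ↦ ?_)
  simp only [Function.comp_apply]
  ring

theorem tendsto_rootCenter_add_cobounded (hω : Tendsto ω l (cobounded ℂ)) (hP : P ≠ 0)
    (hQ : Q ≠ 0) (hK : IsBounded K) :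
    Tendsto (fun x : ι × ℂ ↦ rootCenter P Q τ (ω x.1) + x.2) (l ×ˢ 𝓟 K) (cobounded ℂ) :=
  (tendsto_mul_cobounded_prod_nhds_one.comp (tendsto_rootCenter_add_div hω hP hQ hK)).congr' <|
    (tendsto_fst.eventually (hω.eventually (eventually_ne_cobounded 0))).mono
      fun _ hx ↦ mul_div_cancel₀ _ hx

theorem tendsto_eval_div_eval_div_rootCenter_add (hω : Tendsto ω l (cobounded ℂ)) (hP : P ≠ 0)
    (hQ : Q ≠ 0) (hK : IsBounded K) :
    Tendsto (fun x : ι × ℂ ↦ (P.eval (ω x.1) / Q.eval (ω x.1)) /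
      (P.eval (rootCenter P Q τ (ω x.1) + x.2) / Q.eval (rootCenter P Q τ (ω x.1) + x.2)))
      (l ×ˢ 𝓟 K) (𝓝 1) := by
  have hΦ := tendsto_rootCenter_add_div (τ := τ) hω hP hQ hK
  have h := (((tendsto_eval_mul_div_eval hP).comp hΦ).div ((tendsto_eval_mul_div_eval hQ).comp hΦ)
    one_ne_zero).inv₀ (by norm_num)
  rw [div_one, inv_one] at h
  refine h.congr' <| (tendsto_fst.eventually (hω.eventually (eventually_ne_cobounded 0))).mono
    fun x hx ↦ ?_
  simp only [Function.comp_apply, Pi.div_apply]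
  rw [mul_div_cancel₀ _ hx]
  simp only [div_eq_mul_inv, mul_inv, inv_inv]
  ring

theorem infinite_setOf_eval_add_exp_mul_eval_eq_zero (hP : P ≠ 0) (hQ : Q ≠ 0) (hτ : τ ≠ 0) :
    {s : ℂ | P.eval s + exp (-s * τ) * Q.eval s = 0}.Infinite := by
  set ω : ℕ → ℂ := fun k ↦ k * (2 * Real.pi * I) / τ
  have hω : Tendsto ω atTop (cobounded ℂ) := by
    rw [← tendsto_norm_atTop_iff_cobounded]
    refine (tendsto_natCast_atTop_atTop.atTop_mul_const
      (by positivity : 0 < 2 * Real.pi / ‖τ‖)).congr fun k ↦ ?_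
    simp [ω, abs_of_pos Real.pi_pos]
    ring
  have hperiod : ∀ k, exp (-ω k * τ) = 1 := fun k ↦ by
    rw [neg_mul, div_mul_cancel₀ _ hτ, exp_neg, exp_nat_mul_two_pi_mul_I, inv_one]
  set B := closedBall (0 : ℂ) (1 / (2 * ‖τ‖))
  have hB : IsBounded B := isBounded_closedBall
  have hroots : ∀ᶠ k in atTop, ∃ w ∈ B, rootCenter P Q τ (ω k) + w ∈
      {s : ℂ | P.eval s + exp (-s * τ) * Q.eval s = 0} := by
    filter_upwards [eventually_prod_principal_iff.1
        ((tendsto_eval_div_eval_div_rootCenter_add hω hP hQ hB).eventually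
          (ball_mem_nhds 1 (by norm_num : (0 : ℝ) < 1 / 20))),
      hω.eventually (eventually_eval_ne_zero_cobounded hP),
      hω.eventually (eventually_eval_ne_zero_cobounded hQ)] with k hk hPk hQk
    obtain ⟨w, hw, hroot⟩ := exists_mem_ball_add_exp_mul_eq_zero (p := fun z ↦ P.eval z)
      (q := fun z ↦ Q.eval z) (by fun_prop) (by fun_prop) hτ
      (by rw [exp_neg_rootCenter_mul hτ hPk hQk, hperiod, one_mul])
      (fun w hw ↦ mem_ball_iff_norm.1 (hk w hw))
    exact ⟨w, ball_subset_closedBall hw, hroot⟩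
  intro hfin
  obtain ⟨k, ⟨w, hw, hS⟩, hout⟩ := (hroots.and (eventually_prod_principal_iff.1
    ((tendsto_rootCenter_add_cobounded hω hP hQ hB).eventually
      (isBounded_def.1 hfin.isBounded)))).exists
  exact hout w hw hS

end DelayRoots

theorem quasipolynomial_infinitely_many_roots_general (n m : ℕ)
    (τ : ℝ) (hτ : 0 < τ) (a : Fin n → ℝ) (b : Fin (m + 1) → ℝ)
    (hb : ∃ k, b k ≠ 0) :
    {s : ℂ | s ^ n + (∑ k : Fin n, (a k : ℂ) * s ^ (k : ℕ)) +
      Complex.exp (-s * τ) * (∑ k : Fin (m + 1), (b k : ℂ) * s ^ (k : ℕ)) = 0}.Infinite := by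
  set P : ℂ[X] := X ^ n + ∑ k : Fin n, C (a k : ℂ) * X ^ (k : ℕ)
  set Q : ℂ[X] := ∑ k : Fin (m + 1), C (b k : ℂ) * X ^ (k : ℕ)
  have hP : P ≠ 0 := (monic_X_pow_add (degree_sum_fin_lt _)).ne_zero
  have hQ : Q ≠ 0 := by
    obtain ⟨k, hk⟩ := hb
    intro h
    have := congrArg (coeff · k) h
    simp [Q, Fin.val_inj] at this
    exact hk this
  convert infinite_setOf_eval_add_exp_mul_eval_eq_zero hP hQ (ofReal_ne_zero.2 hτ.ne') using 3
  simp [P, Q, eval_finsetSum, add_assoc]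

/-- The quasipolynomial `Δ(s) = s^n + Σ_{k<n} a_k s^k + e^{-sτ} Σ_{k≤m} b_k s^k`,
with `τ > 0` and not all `b_k` zero, has infinitely many roots in `ℂ`. -/
theorem quasipolynomial_infinitely_many_roots (n m : ℕ) (hn : 1 ≤ n) (hm : m ≤ n)
    (τ : ℝ) (hτ : 0 < τ) (a : Fin n → ℝ) (b : Fin (m + 1) → ℝ)
    (hb : ∃ k, b k ≠ 0) :
    {s : ℂ | s ^ n + (∑ k : Fin n, (a k : ℂ) * s ^ (k : ℕ)) +
      Complex.exp (-s * τ) * (∑ k : Fin (m + 1), (b k : ℂ) * s ^ (k : ℕ)) = 0}.Infinite :=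
  quasipolynomial_infinitely_many_roots_general n m τ hτ a b hb
end

section
/- Let τ > 0 and a₀, a₁, b₀ be real numbers, and let Δ(s) = s² + a₁ s + a₀ + b₀ e^{−sτ}. If s₀ ∈ ℝ is a root of Δ of multiplicity at least 3 (i.e., Δ(s₀) = Δ′(s₀) = Δ″(s₀) = 0), then s₀ is a dominant root of Δ: every complex root s of Δ satisfies Re s ≤ s₀. -/
/-!
Put `w = τ (s - s₀)`. The equations `Δ(s₀) = Δ'(s₀) = Δ''(s₀) = 0` eliminate `a₀, a₁, b₀`, and
`Δ(s) = 0` becomes `e^w (w² - 2w + 2) = 2`. With `K = ∫₀¹ t e^{wt} dt` one has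
`e^w (w² - 2w + 2) - 2 = w² (e^w - 2K)`, so a root with `Re s > s₀` would give `K = e^w / 2`,
whereas `‖K‖ ≤ ∫₀¹ t e^{t Re w} dt < e^{Re w} / 2` once `Re w > 0`.
-/

open Complex intervalIntegral

theorem norm_integral_mul_cexp_lt {w : ℂ} (hw : 0 < w.re) :
    ‖∫ t in (0 : ℝ)..1, (t : ℂ) * exp (w * t)‖ < Real.exp w.re / 2 := by
  calc ‖∫ t in (0 : ℝ)..1, (t : ℂ) * exp (w * t)‖
      ≤ ∫ t in (0 : ℝ)..1, ‖(t : ℂ) * exp (w * t)‖ :=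
        norm_integral_le_integral_norm zero_le_one
    _ = ∫ t in (0 : ℝ)..1, t * Real.exp (w.re * t) := by
        refine integral_congr fun t ht => ?_
        rw [Set.uIcc_of_le zero_le_one] at ht
        simp [Complex.norm_exp, abs_of_nonneg ht.1]
    _ < ∫ t in (0 : ℝ)..1, t * Real.exp w.re := by
        refine integral_lt_integral_of_continuousOn_of_le_of_exists_lt zero_lt_one
          (by fun_prop) (by fun_prop) (fun t ht => ?_) ⟨1 / 2, by norm_num, ?_⟩
        · have ht0 : 0 ≤ t := ht.1.le
          gcongr
          nlinarith [ht.2]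
        · gcongr
          linarith
    _ = Real.exp w.re / 2 := by
        rw [integral_mul_const, integral_id]
        ring

theorem integral_mul_cexp_mul_sq (w : ℂ) :
    (∫ t in (0 : ℝ)..1, (t : ℂ) * exp (w * t)) * w ^ 2 = exp w * (w - 1) + 1 := by
  have hderiv (t : ℝ) : HasDerivAt (fun t : ℝ => exp (w * t) * (w * t - 1))
      ((t : ℂ) * exp (w * t) * w ^ 2) t := by
    have hlin : HasDerivAt (fun z : ℂ => w * z) w t := by
      simpa using (hasDerivAt_id (t : ℂ)).const_mul w
    exact ((hlin.cexp.mul (hlin.sub_const 1)).congr_deriv (by ring)).comp_ofReal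
  rw [← integral_mul_const, integral_eq_sub_of_hasDerivAt (fun t _ => hderiv t)
    (by apply Continuous.intervalIntegrable; fun_prop)]
  simp

theorem exp_mul_sq_sub_two_mul_add_two_ne_two {w : ℂ} (hw : 0 < w.re) :
    exp w * (w ^ 2 - 2 * w + 2) ≠ 2 := by
  intro h
  have hw0 : w ≠ 0 := by rintro rfl; simp at hw
  have hK : ∫ t in (0 : ℝ)..1, (t : ℂ) * exp (w * t) = exp w / 2 := by
    refine mul_left_cancel₀ (pow_ne_zero 2 hw0) ?_
    linear_combination integral_mul_cexp_mul_sq w - h / 2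
  refine (norm_integral_mul_cexp_lt hw).ne ?_
  rw [hK, norm_div, norm_exp]
  norm_num

noncomputable def charQuasipoly (τ a₀ a₁ b₀ : ℝ) (s : ℂ) : ℂ :=
  s ^ 2 + (a₁ : ℂ) * s + (a₀ : ℂ) + (b₀ : ℂ) * exp (-s * τ)

section
variable (τ a₀ a₁ b₀ : ℝ)

theorem hasDerivAt_cexp_neg_mul (z : ℂ) :
    HasDerivAt (fun z : ℂ => exp (-z * τ)) (-τ * exp (-z * τ)) z := by
  simpa [mul_comm] using ((hasDerivAt_id z).neg.mul_const (τ : ℂ)).cexp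

theorem deriv_charQuasipoly :
    deriv (charQuasipoly τ a₀ a₁ b₀) = fun z => 2 * z + a₁ - b₀ * τ * exp (-z * τ) := by
  funext z
  refine HasDerivAt.deriv ?_
  exact ((((hasDerivAt_pow 2 z).add ((hasDerivAt_id' z).const_mul (a₁ : ℂ))).add_const
    (a₀ : ℂ)).add ((hasDerivAt_cexp_neg_mul τ z).const_mul (b₀ : ℂ))).congr_deriv (by ring)

theorem iteratedDeriv_two_charQuasipoly (z : ℂ) :
    iteratedDeriv 2 (charQuasipoly τ a₀ a₁ b₀) z = 2 + b₀ * τ ^ 2 * exp (-z * τ) := by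
  rw [iteratedDeriv_succ, iteratedDeriv_one, deriv_charQuasipoly]
  refine HasDerivAt.deriv ?_
  exact ((((hasDerivAt_id' z).const_mul (2 : ℂ)).add_const (a₁ : ℂ)).sub
    ((hasDerivAt_cexp_neg_mul τ z).const_mul ((b₀ : ℂ) * τ))).congr_deriv (by ring)

theorem exp_mul_eq_two_of_triple_root {s₀ s : ℂ}
    (hmult : ∀ k ≤ 2, iteratedDeriv k (charQuasipoly τ a₀ a₁ b₀) s₀ = 0)
    (hs : charQuasipoly τ a₀ a₁ b₀ s = 0) :
    exp (τ * (s - s₀)) * ((τ * (s - s₀)) ^ 2 - 2 * (τ * (s - s₀)) + 2) = 2 := by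
  have h0 := hmult 0 (by norm_num)
  have h1 := hmult 1 (by norm_num)
  have h2 := hmult 2 le_rfl
  rw [iteratedDeriv_zero, charQuasipoly] at h0
  rw [iteratedDeriv_one, deriv_charQuasipoly] at h1
  rw [iteratedDeriv_two_charQuasipoly] at h2
  rw [charQuasipoly, show -s * τ = -s₀ * τ + -(τ * (s - s₀)) by ring, exp_add] at hs
  have hinv : exp (τ * (s - s₀)) * exp (-(τ * (s - s₀))) = 1 := by
    rw [← exp_add, add_neg_cancel, exp_zero]
  set w := τ * (s - s₀)
  linear_combination exp w * (τ ^ 2 * hs - τ ^ 2 * h0 - τ ^ 2 * (s - s₀) * h1 +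
      (1 - exp (-w) - w) * h2) + 2 * hinv

end

/-- MID property for `n = 2`, `m = 0`: if `s₀ ∈ ℝ` is a root of multiplicity at
least `3` of `Δ(s) = s² + a₁ s + a₀ + b₀ e^{-sτ}` with `τ > 0`, then `s₀` is a
dominant root: every complex root `s` of `Δ` satisfies `Re s ≤ s₀`. -/
theorem mid_dominancy_n2_m0 (τ a₀ a₁ b₀ : ℝ) (hτ : 0 < τ) (s₀ : ℝ)
    (hmult : ∀ k ≤ 2,
      iteratedDeriv k
        (fun s : ℂ => s ^ 2 + (a₁ : ℂ) * s + (a₀ : ℂ) +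
          (b₀ : ℂ) * Complex.exp (-s * τ)) (s₀ : ℂ) = 0) :
    ∀ s : ℂ, s ^ 2 + (a₁ : ℂ) * s + (a₀ : ℂ) + (b₀ : ℂ) * Complex.exp (-s * τ) = 0 →
      s.re ≤ s₀ := by
  intro s hs
  by_contra! hlt
  have hw : 0 < ((τ : ℂ) * (s - s₀)).re := by
    simpa [mul_re] using mul_pos hτ (sub_pos.mpr hlt)
  exact exp_mul_sq_sub_two_mul_add_two_ne_two hw
    (exp_mul_eq_two_of_triple_root τ a₀ a₁ b₀ hmult hs)
end

section
/- Let τ > 0 and a₀, a₁, b₀, b₁ be real numbers, and let Δ(s) = s² + a₁ s + a₀ + e^{−sτ}(b₁ s + b₀). If s₀ ∈ ℝ is a root of Δ of multiplicity at least 4 (i.e., Δ^{(k)}(s₀) = 0 for 0 ≤ k ≤ 3), then s₀ is a strictly dominant root of Δ: every complex root s ≠ s₀ of Δ satisfies Re s < s₀. -/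
/-!
Put `z = (s - s₀) τ`. The four conditions `Δ^{(k)}(s₀) = 0` pin down all coefficients in terms
of `s₀` and `τ`, and turn `τ² Δ(s)` into `Φ(z) = z² - 4z + 6 - e^{-z}(2z + 6)` (`midNormalForm`),
so it suffices to show that `Φ` has no zero `z ≠ 0` with `Re z ≥ 0`.

Integrating by parts, `Φ(z) = z⁴ ∫₀¹ t(1-t)² e^{-zt} dt`. If `|Im z| < π`, the real part of
`e^{z/2}` times this integral is `∫₀¹ t(1-t)² e^{-Re z (t-1/2)} cos(Im z (t-1/2)) dt > 0`, since
the cosine is evaluated in `(-π/2, π/2)`. If `|Im z| ≥ π` and `Re z ≥ 0`, taking moduli in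
`z² - 4z + 6 = e^{-z}(2z + 6)` and using `e^{2x} ≥ 1 + 2x + 2x²` (`x = Re z`) gives
`|2z + 6|² ≥ |z² - 4z + 6|² (1 + 2x + 2x²)`, a polynomial inequality that fails once `(Im z)² ≥ π²`.
-/

open Complex

noncomputable def quasipoly (τ A B C D E w : ℂ) : ℂ :=
  A * w ^ 2 + B * w + C + exp (-w * τ) * (D * w + E)

noncomputable def midNormalForm (z : ℂ) : ℂ :=
  z ^ 2 - 4 * z + 6 - exp (-z) * (2 * z + 6)

theorem hasDerivAt_quasipoly (τ A B C D E w : ℂ) :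
    HasDerivAt (quasipoly τ A B C D E) (quasipoly τ 0 (2 * A) B (-τ * D) (D - τ * E) w) w := by
  have hexp : HasDerivAt (fun w => exp (-w * τ)) (exp (-w * τ) * (-1 * τ)) w :=
    ((hasDerivAt_id w).neg.mul_const τ).cexp
  have := (((hasDerivAt_pow 2 w).const_mul A).add ((hasDerivAt_id w).const_mul B)).add_const C
    |>.add (hexp.mul (((hasDerivAt_id w).const_mul D).add_const E))
  refine (this : HasDerivAt (quasipoly τ A B C D E) _ w).congr_deriv ?_
  simp only [quasipoly, id]
  push_cast
  ring

theorem deriv_quasipoly (τ A B C D E : ℂ) :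
    deriv (quasipoly τ A B C D E) = quasipoly τ 0 (2 * A) B (-τ * D) (D - τ * E) :=
  funext fun w => (hasDerivAt_quasipoly τ A B C D E w).deriv

theorem sq_mul_quasipoly_eq_midNormalForm {τ a₀ a₁ b₀ b₁ s₀ : ℂ} (hτ : τ ≠ 0)
    (hmult : ∀ k ≤ 3, iteratedDeriv k (quasipoly τ 1 a₁ a₀ b₁ b₀) s₀ = 0) (s : ℂ) :
    τ ^ 2 * quasipoly τ 1 a₁ a₀ b₁ b₀ s = midNormalForm ((s - s₀) * τ) := by
  have h0 := hmult 0 (by norm_num)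
  have h1 := hmult 1 (by norm_num)
  have h2 := hmult 2 (by norm_num)
  have h3 := hmult 3 (by norm_num)
  simp only [iteratedDeriv_succ', iteratedDeriv_zero, deriv_quasipoly] at h0 h1 h2 h3
  simp only [quasipoly] at h0 h1 h2 h3
  set e := exp (-s₀ * τ)
  have hb₁ : τ ^ 2 * e * b₁ = -2 * τ := by linear_combination τ * h2 + h3
  have hb₀ : τ ^ 2 * e * (b₁ * s₀ + b₀) = -6 :=
    mul_left_cancel₀ hτ (by linear_combination -h3 + 3 * hb₁)
  have ha₁ : τ * a₁ + 2 * τ * s₀ = -4 :=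
    mul_left_cancel₀ hτ (by linear_combination τ ^ 2 * h1 - hb₁ + τ * hb₀)
  have ha₀ : τ ^ 2 * (s₀ ^ 2 + a₁ * s₀ + a₀) = 6 := by linear_combination τ ^ 2 * h0 - hb₀
  have hexp : exp (-s * τ) = e * exp (-((s - s₀) * τ)) := by
    rw [← exp_add]; ring_nf
  rw [quasipoly, midNormalForm, hexp]
  linear_combination (s - s₀) * τ * ha₁ + ha₀
    + exp (-((s - s₀) * τ)) * (s - s₀) * hb₁ + exp (-((s - s₀) * τ)) * hb₀

theorem midNormalForm_eq_integral (z : ℂ) :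
    midNormalForm z = z ^ 4 * ∫ t in (0 : ℝ)..1, (t * (1 - t) ^ 2 : ℂ) * exp (-z * t) := by
  have hderiv (t : ℝ) : HasDerivAt
      (fun t : ℝ => -exp (-z * t) *
        (z ^ 3 * (t * (1 - t) ^ 2) + z ^ 2 * (3 * t ^ 2 - 4 * t + 1) + z * (6 * t - 4) + 6))
      (z ^ 4 * ((t * (1 - t) ^ 2 : ℂ) * exp (-z * t))) t := by
    have hexp : HasDerivAt (fun w : ℂ => exp (-z * w)) (exp (-z * t) * (-z * 1)) t :=
      ((hasDerivAt_id (t : ℂ)).const_mul (-z)).cexp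
    have hpoly : HasDerivAt
        (fun w : ℂ =>
          z ^ 3 * (w * (1 - w) ^ 2) + z ^ 2 * (3 * w ^ 2 - 4 * w + 1) + z * (6 * w - 4) + 6)
        (z ^ 3 * (3 * t ^ 2 - 4 * t + 1) + z ^ 2 * (6 * t - 4) + z * 6) t := by
      have hid := hasDerivAt_id (t : ℂ)
      have := (((hid.mul (hid.const_sub 1 |>.pow 2)).const_mul (z ^ 3)).add
        ((((hasDerivAt_pow 2 (t : ℂ)).const_mul 3).sub (hid.const_mul 4)).add_const 1
          |>.const_mul (z ^ 2))).add ((hid.const_mul 6).sub_const 4 |>.const_mul z)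
        |>.add_const 6
      refine this.congr_deriv ?_
      simp only [id, Pi.pow_apply]
      push_cast
      ring
    refine (hexp.neg.mul hpoly).comp_ofReal.congr_deriv ?_
    simp only [Pi.neg_apply]
    ring
  rw [← intervalIntegral.integral_const_mul,
    intervalIntegral.integral_eq_sub_of_hasDerivAt (fun t _ => hderiv t)
      ((by fun_prop : Continuous _).intervalIntegrable _ _)]
  simp only [midNormalForm, ofReal_one, ofReal_zero, mul_zero, mul_one, exp_zero]
  ring

theorem integral_ne_zero_of_abs_im_lt_pi {z : ℂ} (him : |z.im| < Real.pi) :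
    ∫ t in (0 : ℝ)..1, (t * (1 - t) ^ 2 : ℂ) * exp (-z * t) ≠ 0 := by
  have hshift (t : ℝ) : (exp (z / 2) * ((t * (1 - t) ^ 2 : ℂ) * exp (-z * t))).re
      = t * (1 - t) ^ 2 * (Real.exp (-(z.re * (t - 1 / 2))) * Real.cos (z.im * (t - 1 / 2))) := by
    have : exp (z / 2) * ((t * (1 - t) ^ 2 : ℂ) * exp (-z * t))
        = ((t * (1 - t) ^ 2 : ℝ) : ℂ) * exp (-(z * ((t - 1 / 2 : ℝ) : ℂ))) := by
      rw [mul_left_comm, ← exp_add]; push_cast; ring_nf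
    rw [this, re_ofReal_mul, exp_re, neg_re, neg_im, mul_re, mul_im, ofReal_re, ofReal_im,
      Real.cos_neg]
    ring_nf
  have hpos : 0 < (exp (z / 2) * ∫ t in (0 : ℝ)..1, (t * (1 - t) ^ 2 : ℂ) * exp (-z * t)).re := by
    rw [← intervalIntegral.integral_const_mul, ← RCLike.re_to_complex,
      ← intervalIntegral.intervalIntegral_re ((by fun_prop : Continuous _).intervalIntegrable _ _)]
    simp only [RCLike.re_to_complex, hshift]
    refine intervalIntegral.intervalIntegral_pos_of_pos_on
      ((by fun_prop : Continuous _).intervalIntegrable _ _) (fun t ⟨ht0, ht1⟩ => ?_) zero_lt_one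
    have hcos : 0 < Real.cos (z.im * (t - 1 / 2)) := by
      refine Real.cos_pos_of_mem_Ioo (abs_lt.mp ?_)
      rw [abs_mul]
      have : |t - 1 / 2| < 1 / 2 := abs_lt.mpr ⟨by linarith, by linarith⟩
      nlinarith [abs_nonneg z.im, abs_nonneg (t - 1 / 2)]
    have : 0 < 1 - t := by linarith
    positivity
  intro h
  rw [h, mul_zero, zero_re] at hpos
  exact hpos.false

theorem normSq_lt_of_re_nonneg_of_pi_le_abs_im {z : ℂ} (hre : 0 ≤ z.re)
    (him : Real.pi ≤ |z.im|) :
    normSq (2 * z + 6) < normSq (z ^ 2 - 4 * z + 6) * (1 + 2 * z.re + 2 * z.re ^ 2) := by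
  set x := z.re
  set w := z.im ^ 2
  have hw : 9.86 ≤ w := by nlinarith [Real.pi_gt_d6, sq_abs z.im]
  -- the difference of the two sides, in `x` and `w`; `9.86 < π²` is what the bound needs
  have hgap : 0 < w ^ 2 + 2 * x * w ^ 2 - 6 * x ^ 2 * w + 2 * x ^ 2 * w ^ 2 - 48 * x ^ 3
      - 12 * x ^ 3 * w + 41 * x ^ 4 + 4 * x ^ 4 * w - 14 * x ^ 5 + 2 * x ^ 6 := by
    nlinarith [sq_nonneg (x ^ 3 - 3.5 * x ^ 2), sq_nonneg (55.94 * x ^ 2 - 83.16 * x),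
      mul_nonneg (sub_nonneg.2 hw) (sq_nonneg (2 * x ^ 2 - 3 * x)),
      mul_nonneg (sub_nonneg.2 hw) (mul_nonneg hre hre), mul_nonneg (sub_nonneg.2 hw) hre,
      sq_nonneg (w - 9.86), mul_nonneg hre (sq_nonneg (w - 9.86)),
      mul_nonneg (mul_nonneg hre hre) (sq_nonneg (w - 9.86))]
  simp only [normSq_apply, pow_two, add_re, add_im, sub_re, sub_im, mul_re, mul_im, re_ofNat,
    im_ofNat] at hgap ⊢
  linear_combination hgap

theorem midNormalForm_ne_zero_of_pi_le_abs_im {z : ℂ} (hre : 0 ≤ z.re)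
    (him : Real.pi ≤ |z.im|) : midNormalForm z ≠ 0 := by
  intro h
  have hnorm : ‖z ^ 2 - 4 * z + 6‖ * Real.exp z.re = ‖2 * z + 6‖ := by
    rw [sub_eq_zero.mp h, norm_mul, norm_exp, neg_re, mul_right_comm, ← Real.exp_add,
      neg_add_cancel, Real.exp_zero, one_mul]
  have hexp : 1 + 2 * z.re + 2 * z.re ^ 2 ≤ Real.exp z.re ^ 2 := by
    rw [← Real.exp_nat_mul]
    have := Real.quadratic_le_exp_of_nonneg (mul_nonneg zero_le_two hre)
    push_cast
    linarith
  have := normSq_lt_of_re_nonneg_of_pi_le_abs_im hre him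
  rw [← Complex.sq_norm, ← Complex.sq_norm, ← hnorm, mul_pow] at this
  nlinarith [mul_le_mul_of_nonneg_left hexp (sq_nonneg ‖z ^ 2 - 4 * z + 6‖)]

theorem re_neg_of_midNormalForm_eq_zero {z : ℂ} (hΦ : midNormalForm z = 0) (hz : z ≠ 0) :
    z.re < 0 := by
  by_contra! hre
  rcases lt_or_ge |z.im| Real.pi with him | him
  · rw [midNormalForm_eq_integral] at hΦ
    exact integral_ne_zero_of_abs_im_lt_pi him
      ((mul_eq_zero.mp hΦ).resolve_left (pow_ne_zero 4 hz))
  · exact midNormalForm_ne_zero_of_pi_le_abs_im hre him hΦ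

/-- MID property for `n = 2`, `m = 1`: if `s₀ ∈ ℝ` is a root of multiplicity at
least `4` of `Δ(s) = s² + a₁ s + a₀ + e^{-sτ}(b₁ s + b₀)` with `τ > 0`, then
`s₀` is strictly dominant: every complex root `s ≠ s₀` satisfies `Re s < s₀`. -/
theorem mid_strict_dominancy_n2_m1 (τ a₀ a₁ b₀ b₁ : ℝ) (hτ : 0 < τ) (s₀ : ℝ)
    (hmult : ∀ k ≤ 3,
      iteratedDeriv k
        (fun s : ℂ => s ^ 2 + (a₁ : ℂ) * s + (a₀ : ℂ) +
          Complex.exp (-s * τ) * ((b₁ : ℂ) * s + (b₀ : ℂ))) (s₀ : ℂ) = 0) :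
    ∀ s : ℂ, s ^ 2 + (a₁ : ℂ) * s + (a₀ : ℂ) +
        Complex.exp (-s * τ) * ((b₁ : ℂ) * s + (b₀ : ℂ)) = 0 →
      s ≠ (s₀ : ℂ) → s.re < s₀ := by
  intro s hs hne
  have hτ' : (τ : ℂ) ≠ 0 := ofReal_ne_zero.mpr hτ.ne'
  have hΔ : (fun s : ℂ => s ^ 2 + (a₁ : ℂ) * s + (a₀ : ℂ) +
      Complex.exp (-s * τ) * ((b₁ : ℂ) * s + (b₀ : ℂ))) = quasipoly τ 1 a₁ a₀ b₁ b₀ := by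
    funext w
    rw [quasipoly, one_mul]
  rw [hΔ] at hmult
  have hΦ : midNormalForm ((s - s₀) * τ) = 0 := by
    rw [← sq_mul_quasipoly_eq_midNormalForm hτ' hmult, ← congrFun hΔ s, hs, mul_zero]
  have hre := re_neg_of_midNormalForm_eq_zero hΦ (mul_ne_zero (sub_ne_zero.mpr hne) hτ')
  rw [re_mul_ofReal, sub_re, ofReal_re] at hre
  linarith [neg_of_mul_neg_left hre hτ.le]
end

section
/- Let τ > 0 and a₀, b₀, b₁ be real numbers, and let Δ(s) = s + a₀ + e^{−sτ}(b₁ s + b₀). If s₀ ∈ ℝ is a root of Δ of multiplicity at least 3 (i.e., Δ(s₀) = Δ′(s₀) = Δ″(s₀) = 0), then s₀ is a dominant root of Δ: every complex root s of Δ satisfies Re s ≤ s₀. -/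
lemma sinh_lt_mul_cosh {x : ℝ} (hx : 0 < x) : Real.sinh x < x * Real.cosh x := by
  have hmono : StrictMonoOn (fun t : ℝ => t * Real.cosh t - Real.sinh t) (Set.Ici 0) := by
    refine strictMonoOn_of_deriv_pos (convex_Ici _) ?_ fun t ht => ?_
    · exact ((continuous_id.mul Real.continuous_cosh).sub Real.continuous_sinh).continuousOn
    · rw [interior_Ici, Set.mem_Ioi] at ht
      have h1 : HasDerivAt (fun t : ℝ => t * Real.cosh t - Real.sinh t)
          (1 * Real.cosh t + t * Real.sinh t - Real.cosh t) t :=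
        ((hasDerivAt_id t).mul (Real.hasDerivAt_cosh t)).sub (Real.hasDerivAt_sinh t)
      rw [h1.deriv]
      have := Real.sinh_pos_iff.2 ht
      nlinarith
  have := hmono Set.self_mem_Ici (Set.mem_Ici.2 hx.le) hx
  simpa using this

/-- If `v cosh v = sinh v` for a complex `v`, then `Re v ≤ 0`. -/
lemma re_nonpos_of_self_mul_cosh_eq_sinh {v : ℂ}
    (hv : v * Complex.cosh v = Complex.sinh v) : v.re ≤ 0 := by
  by_contra hx
  push_neg at hx
  set x := v.re with hxdef
  set y := v.im with hydef
  have hvc : (starRingEnd ℂ) v * Complex.cosh ((starRingEnd ℂ) v)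
      = Complex.sinh ((starRingEnd ℂ) v) := by
    rw [Complex.cosh_conj, Complex.sinh_conj, ← map_mul]
    exact congrArg _ hv
  set c := (starRingEnd ℂ) v with hcdef
  have hA : Complex.sinh (v + c) = (v + c) * (Complex.cosh v * Complex.cosh c) := by
    rw [Complex.sinh_add]
    linear_combination -(Complex.cosh c * hv) - Complex.cosh v * hvc
  have hB : Complex.sinh (v - c) = (v - c) * (Complex.cosh v * Complex.cosh c) := by
    rw [Complex.sinh_sub]
    linear_combination -(Complex.cosh c * hv) + Complex.cosh v * hvc
  set N : ℝ := Complex.normSq (Complex.cosh v) with hNdef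
  have hK : Complex.cosh v * Complex.cosh c = (N : ℂ) := by
    rw [hcdef, Complex.cosh_conj, Complex.mul_conj]
  have hN0 : 0 ≤ N := Complex.normSq_nonneg _
  -- real equation from hA
  have hA' : Real.sinh (2 * x) = 2 * x * N := by
    have h1 : (Real.sinh (2 * x) : ℂ) = ((2 * x * N : ℝ) : ℂ) := by
      rw [Complex.ofReal_sinh,
        show ((2 * x : ℝ) : ℂ) = v + c from by rw [hxdef, Complex.add_conj], hA, hK,
        Complex.add_conj]
      push_cast
      ring
    exact_mod_cast h1
  -- real equation from hB
  have hB' : Real.sin (2 * y) = 2 * y * N := by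
    have h2 : ((2 * y : ℝ) : ℂ) * Complex.I = v - c := by rw [hydef]; exact (Complex.sub_conj v).symm
    have h1 : (Real.sin (2 * y) : ℂ) * Complex.I = ((2 * y * N : ℝ) : ℂ) * Complex.I := by
      rw [Complex.ofReal_sin, ← Complex.sinh_mul_I, h2, hB, hK, ← h2]
      push_cast
      ring
    have h3 := mul_right_cancel₀ Complex.I_ne_zero h1
    exact_mod_cast h3
  -- x > 0 gives N > 1
  have hsinh : 2 * x < Real.sinh (2 * x) := Real.self_lt_sinh_iff.2 (by linarith)
  have hN1 : 1 < N := by nlinarith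
  by_cases hy : y = 0
  · -- v is real, contradiction with sinh x < x cosh x
    have hvx : v = (x : ℂ) := Complex.ext rfl (by simpa using hy)
    rw [hvx, ← Complex.ofReal_cosh, ← Complex.ofReal_sinh] at hv
    have hreal : x * Real.cosh x = Real.sinh x := by exact_mod_cast hv
    have := sinh_lt_mul_cosh hx
    linarith
  · have h1 : |Real.sin (2 * y)| ≤ |2 * y| := Real.abs_sin_le_abs
    rw [hB', abs_mul, abs_of_nonneg hN0] at h1
    have h2y : 0 < |2 * y| := by positivity
    nlinarith

/-- MID property for the neutral equation of order 1: if `s₀ ∈ ℝ` is a root of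
multiplicity at least `3` of `Δ(s) = s + a₀ + e^{-sτ}(b₁ s + b₀)` with `τ > 0`,
then `s₀` is dominant: every complex root `s` of `Δ` satisfies `Re s ≤ s₀`. -/
theorem mid_dominancy_neutral_order_one (τ a₀ b₀ b₁ : ℝ) (hτ : 0 < τ) (s₀ : ℝ)
    (hmult : ∀ k ≤ 2,
      iteratedDeriv k
        (fun s : ℂ => s + (a₀ : ℂ) +
          Complex.exp (-s * τ) * ((b₁ : ℂ) * s + (b₀ : ℂ))) (s₀ : ℂ) = 0) :
    ∀ s : ℂ, s + (a₀ : ℂ) + Complex.exp (-s * τ) * ((b₁ : ℂ) * s + (b₀ : ℂ)) = 0 →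
      s.re ≤ s₀ := by
  intro s hs
  have hτc : (τ : ℂ) ≠ 0 := by exact_mod_cast hτ.ne'
  -- derivatives of the exponential and polynomial factors
  have he : ∀ u : ℂ, HasDerivAt (fun s : ℂ => Complex.exp (-s * τ))
      (Complex.exp (-u * τ) * (-(τ : ℂ))) u := by
    intro u
    have hlin : HasDerivAt (fun s : ℂ => -s * (τ : ℂ)) (-(τ : ℂ)) u := by
      simpa using (hasDerivAt_id u).neg.mul_const (τ : ℂ)
    exact hlin.cexp
  have hp : ∀ u : ℂ, HasDerivAt (fun s : ℂ => (b₁ : ℂ) * s + (b₀ : ℂ)) (b₁ : ℂ) u := by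
    intro u
    simpa using ((hasDerivAt_id u).const_mul (b₁ : ℂ)).add_const (b₀ : ℂ)
  have hf : ∀ u : ℂ, HasDerivAt
      (fun s : ℂ => s + (a₀ : ℂ) + Complex.exp (-s * τ) * ((b₁ : ℂ) * s + (b₀ : ℂ)))
      (1 + (Complex.exp (-u * τ) * (-(τ : ℂ)) * ((b₁ : ℂ) * u + (b₀ : ℂ))
        + Complex.exp (-u * τ) * (b₁ : ℂ))) u := by
    intro u
    exact ((hasDerivAt_id u).add_const (a₀ : ℂ)).add ((he u).mul (hp u))
  have hderiv1 : deriv (fun s : ℂ => s + (a₀ : ℂ) +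
      Complex.exp (-s * τ) * ((b₁ : ℂ) * s + (b₀ : ℂ)))
      = fun u : ℂ => 1 + (Complex.exp (-u * τ) * (-(τ : ℂ)) * ((b₁ : ℂ) * u + (b₀ : ℂ))
        + Complex.exp (-u * τ) * (b₁ : ℂ)) :=
    funext fun u => (hf u).deriv
  have hg : ∀ u : ℂ, HasDerivAt
      (fun u : ℂ => 1 + (Complex.exp (-u * τ) * (-(τ : ℂ)) * ((b₁ : ℂ) * u + (b₀ : ℂ))
        + Complex.exp (-u * τ) * (b₁ : ℂ)))
      ((Complex.exp (-u * τ) * (-(τ : ℂ)) * (-(τ : ℂ))) * ((b₁ : ℂ) * u + (b₀ : ℂ))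
        + Complex.exp (-u * τ) * (-(τ : ℂ)) * (b₁ : ℂ)
        + Complex.exp (-u * τ) * (-(τ : ℂ)) * (b₁ : ℂ)) u := by
    intro u
    exact ((((he u).mul_const (-(τ : ℂ))).mul (hp u)).add ((he u).mul_const (b₁ : ℂ))).const_add 1
  -- the three multiplicity equations
  set E₀ : ℂ := Complex.exp (-(s₀ : ℂ) * τ) with hE₀def
  have hE₀ : E₀ ≠ 0 := Complex.exp_ne_zero _
  have Eq0 : (s₀ : ℂ) + a₀ + E₀ * ((b₁ : ℂ) * s₀ + b₀) = 0 := by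
    have := hmult 0 (by norm_num)
    rwa [iteratedDeriv_zero] at this
  have Eq1 : 1 + (E₀ * (-(τ : ℂ)) * ((b₁ : ℂ) * s₀ + b₀) + E₀ * (b₁ : ℂ)) = 0 := by
    have := hmult 1 (by norm_num)
    rwa [iteratedDeriv_one, hderiv1] at this
  have Eq2 : (E₀ * (-(τ : ℂ)) * (-(τ : ℂ))) * ((b₁ : ℂ) * s₀ + b₀)
      + E₀ * (-(τ : ℂ)) * (b₁ : ℂ) + E₀ * (-(τ : ℂ)) * (b₁ : ℂ) = 0 := by
    have h := hmult 2 (by norm_num)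
    rw [iteratedDeriv_succ, iteratedDeriv_one, hderiv1] at h
    rwa [(hg (s₀ : ℂ)).deriv] at h
  -- extract the coefficient relations
  have hP : (τ : ℂ) * ((b₁ : ℂ) * s₀ + b₀) = 2 * b₁ := by
    have h2 : ((τ : ℂ) * E₀) * ((τ : ℂ) * ((b₁ : ℂ) * s₀ + b₀))
        = ((τ : ℂ) * E₀) * (2 * (b₁ : ℂ)) := by linear_combination Eq2
    exact mul_left_cancel₀ (mul_ne_zero hτc hE₀) h2
  have hEb : E₀ * (b₁ : ℂ) = 1 := by linear_combination (-1 : ℂ) * Eq1 - E₀ * hP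
  have haτ : (τ : ℂ) * a₀ = -(τ : ℂ) * s₀ - 2 := by
    linear_combination (τ : ℂ) * Eq0 - E₀ * hP - 2 * hEb
  -- reduce to the normalized equation in w = (s - s₀)τ
  set w : ℂ := (s - (s₀ : ℂ)) * τ with hwdef
  have hexp : Complex.exp (-s * τ) = Complex.exp (-w) * E₀ := by
    rw [hE₀def, ← Complex.exp_add]
    congr 1
    rw [hwdef]; ring
  have hw : w - 2 + Complex.exp (-w) * (w + 2) = 0 := by
    linear_combination (τ : ℂ) * hs - haτ - ((τ : ℂ) * ((b₁ : ℂ) * s + (b₀ : ℂ))) * hexp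
      + Complex.exp (-w) * (-w - 2) * hEb - Complex.exp (-w) * E₀ * hP
  -- pass to v = w/2 and sinh/cosh form
  set v : ℂ := w / 2 with hvdef
  have hev : Complex.exp (-w) * Complex.exp v = Complex.exp (-v) := by
    rw [← Complex.exp_add]
    congr 1
    rw [hvdef]; ring
  have h2 : Complex.exp v * (w - 2) + Complex.exp (-v) * (w + 2) = 0 := by
    linear_combination Complex.exp v * hw - (w + 2) * hev
  have hsv : Complex.sinh v = (Complex.exp v - Complex.exp (-v)) / 2 := rfl
  have hcv : Complex.cosh v = (Complex.exp v + Complex.exp (-v)) / 2 := rfl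
  have hveq : v * Complex.cosh v = Complex.sinh v := by
    rw [hsv, hcv, hvdef]
    linear_combination (1 / 4 : ℂ) * h2
  have hre := re_nonpos_of_self_mul_cosh_eq_sinh hveq
  -- conclude
  have hv2 : v = (s - (s₀ : ℂ)) * ((τ / 2 : ℝ) : ℂ) := by
    rw [hvdef, hwdef]; push_cast; ring
  have hvre : v.re = (s.re - s₀) * (τ / 2) := by
    rw [hv2]
    simp [Complex.mul_re, Complex.sub_re, Complex.ofReal_re, Complex.ofReal_im]
  rw [hvre] at hre
  nlinarith [hre, hτ]
end

section
/- Let τ > 0 and a₀, a₁, b₀ be real numbers, and let Δ(s) = s² + a₁ s + a₀ + b₀ e^{−sτ}. If s₁, s₂, s₃ are real numbers with s₁ > s₂ > s₃ and Δ(s₁) = Δ(s₂) = Δ(s₃) = 0, then s₁ is a dominant root of Δ: every complex root s of Δ satisfies Re s ≤ s₁. -/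
set_option maxHeartbeats 1000000

open intervalIntegral in
/-- FTC for the exponential along a segment. -/
lemma exp_segment_integral (c d : ℂ) (hd : d ≠ 0) :
    ∫ v in (0:ℝ)..1, Complex.exp (c + d * v) =
      (Complex.exp (c + d) - Complex.exp c) / d := by
  have h : ∀ v : ℝ, Complex.exp (c + d * v) = Complex.exp c * Complex.exp (d * v) :=
    fun v => Complex.exp_add _ _
  simp_rw [h]
  rw [intervalIntegral.integral_const_mul, integral_exp_mul_complex hd]
  push_cast
  rw [mul_one, mul_zero, Complex.exp_zero, Complex.exp_add]
  field_simp

/-- CRRID property for `n = 2`, `m = 0`: if `s₁ > s₂ > s₃` are three real roots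
of `Δ(s) = s² + a₁ s + a₀ + b₀ e^{-sτ}` with `τ > 0`, then `s₁` is dominant:
every complex root `s` of `Δ` satisfies `Re s ≤ s₁`. -/
theorem crrid_dominancy_n2_m0 (τ a₀ a₁ b₀ : ℝ) (hτ : 0 < τ) (s₁ s₂ s₃ : ℝ)
    (h12 : s₂ < s₁) (h23 : s₃ < s₂)
    (h1 : (s₁ : ℂ) ^ 2 + (a₁ : ℂ) * s₁ + (a₀ : ℂ) +
      (b₀ : ℂ) * Complex.exp (-(s₁ : ℂ) * τ) = 0)
    (h2 : (s₂ : ℂ) ^ 2 + (a₁ : ℂ) * s₂ + (a₀ : ℂ) +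
      (b₀ : ℂ) * Complex.exp (-(s₂ : ℂ) * τ) = 0)
    (h3 : (s₃ : ℂ) ^ 2 + (a₁ : ℂ) * s₃ + (a₀ : ℂ) +
      (b₀ : ℂ) * Complex.exp (-(s₃ : ℂ) * τ) = 0) :
    ∀ s : ℂ, s ^ 2 + (a₁ : ℂ) * s + (a₀ : ℂ) + (b₀ : ℂ) * Complex.exp (-s * τ) = 0 →
      s.re ≤ s₁ := by
  intro z hz
  by_contra hre
  push_neg at hre
  -- basic facts
  have hτc : (τ : ℂ) ≠ 0 := by exact_mod_cast hτ.ne'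
  have hz1 : z - (s₁ : ℂ) ≠ 0 := by
    intro h; rw [sub_eq_zero] at h
    rw [h] at hre; simp only [Complex.ofReal_re] at hre; linarith
  have hz2 : z - (s₂ : ℂ) ≠ 0 := by
    intro h; rw [sub_eq_zero] at h
    rw [h] at hre; simp only [Complex.ofReal_re] at hre; linarith
  have hs31 : (s₃ : ℂ) - (s₁ : ℂ) ≠ 0 := by
    intro h; rw [sub_eq_zero] at h
    exact absurd (Complex.ofReal_inj.mp h) (by intro hh; linarith)
  have hs32 : (s₃ : ℂ) - (s₂ : ℂ) ≠ 0 := by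
    intro h; rw [sub_eq_zero] at h
    exact absurd (Complex.ofReal_inj.mp h) (by intro hh; linarith)
  -- the integrand
  set f : ℂ → ℝ → ℂ := fun w v =>
    Complex.exp (-((s₁ : ℂ) + (v : ℂ) * (w - s₁)) * τ) -
      Complex.exp (-((s₂ : ℂ) + (v : ℂ) * (w - s₂)) * τ) with hf
  have hfcont : ∀ w : ℂ, Continuous (f w) := by
    intro w
    apply Continuous.sub <;> exact Complex.continuous_exp.comp (by fun_prop)
  -- key evaluation of the integral at a root
  have eval : ∀ w : ℂ, w - (s₁ : ℂ) ≠ 0 → w - (s₂ : ℂ) ≠ 0 →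
      w ^ 2 + (a₁ : ℂ) * w + (a₀ : ℂ) + (b₀ : ℂ) * Complex.exp (-w * τ) = 0 →
      (b₀ : ℂ) * (τ : ℂ) * ∫ v in (0:ℝ)..1, f w v = (s₁ : ℂ) - (s₂ : ℂ) := by
    intro w hw1 hw2 hw
    have hc1 : -(w - (s₁ : ℂ)) * τ ≠ 0 := mul_ne_zero (neg_ne_zero.mpr hw1) hτc
    have hc2 : -(w - (s₂ : ℂ)) * τ ≠ 0 := mul_ne_zero (neg_ne_zero.mpr hw2) hτc
    have e1 : ∫ v in (0:ℝ)..1, Complex.exp (-((s₁ : ℂ) + (v : ℂ) * (w - s₁)) * τ) =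
        (Complex.exp (-w * τ) - Complex.exp (-(s₁ : ℂ) * τ)) / (-(w - (s₁ : ℂ)) * τ) := by
      have hrw : ∀ v : ℝ, Complex.exp (-((s₁ : ℂ) + (v : ℂ) * (w - s₁)) * τ) =
          Complex.exp (-(s₁ : ℂ) * τ + (-(w - (s₁ : ℂ)) * τ) * v) := by
        intro v; congr 1; ring
      simp_rw [hrw]
      rw [exp_segment_integral _ _ hc1,
        show -(s₁ : ℂ) * τ + -(w - (s₁ : ℂ)) * τ = -w * τ by ring]
    have e2 : ∫ v in (0:ℝ)..1, Complex.exp (-((s₂ : ℂ) + (v : ℂ) * (w - s₂)) * τ) =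
        (Complex.exp (-w * τ) - Complex.exp (-(s₂ : ℂ) * τ)) / (-(w - (s₂ : ℂ)) * τ) := by
      have hrw : ∀ v : ℝ, Complex.exp (-((s₂ : ℂ) + (v : ℂ) * (w - s₂)) * τ) =
          Complex.exp (-(s₂ : ℂ) * τ + (-(w - (s₂ : ℂ)) * τ) * v) := by
        intro v; congr 1; ring
      simp_rw [hrw]
      rw [exp_segment_integral _ _ hc2,
        show -(s₂ : ℂ) * τ + -(w - (s₂ : ℂ)) * τ = -w * τ by ring]
    have hsub : ∫ v in (0:ℝ)..1, f w v =
        (∫ v in (0:ℝ)..1, Complex.exp (-((s₁ : ℂ) + (v : ℂ) * (w - s₁)) * τ)) -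
          ∫ v in (0:ℝ)..1, Complex.exp (-((s₂ : ℂ) + (v : ℂ) * (w - s₂)) * τ) := by
      simp only [hf]
      exact intervalIntegral.integral_sub
        ((Complex.continuous_exp.comp (by fun_prop)).intervalIntegrable 0 1)
        ((Complex.continuous_exp.comp (by fun_prop)).intervalIntegrable 0 1)
    rw [hsub, e1, e2]
    have p1 : (b₀ : ℂ) * (Complex.exp (-w * τ) - Complex.exp (-(s₁ : ℂ) * τ)) =
        -(w - s₁) * (w + s₁ + a₁) := by linear_combination hw - h1
    have p2 : (b₀ : ℂ) * (Complex.exp (-w * τ) - Complex.exp (-(s₂ : ℂ) * τ)) =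
        -(w - s₂) * (w + s₂ + a₁) := by linear_combination hw - h2
    rw [div_sub_div _ _ hc1 hc2, ← mul_div_assoc, div_eq_iff (mul_ne_zero hc1 hc2)]
    linear_combination (-(w - (s₂ : ℂ)) * (τ : ℂ) * (τ : ℂ)) * p1 +
      ((w - (s₁ : ℂ)) * (τ : ℂ) * (τ : ℂ)) * p2
  -- b₀ ≠ 0
  have hb : (b₀ : ℂ) * (τ : ℂ) ≠ 0 := by
    intro h
    have h3' := eval (s₃ : ℂ) hs31 hs32 h3
    rw [h, zero_mul] at h3'
    have : (s₁ : ℝ) = s₂ := by exact_mod_cast sub_eq_zero.mp h3'.symm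
    linarith
  -- the two integrals coincide
  have hIeq : (∫ v in (0:ℝ)..1, f z v) = ∫ v in (0:ℝ)..1, f (s₃ : ℂ) v :=
    mul_left_cancel₀ hb ((eval z hz1 hz2 hz).trans (eval _ hs31 hs32 h3).symm)
  -- pass to real parts
  have hreint : ∀ w : ℂ, (∫ v in (0:ℝ)..1, f w v).re = ∫ v in (0:ℝ)..1, (f w v).re := by
    intro w
    have hint : IntervalIntegrable (f w) MeasureTheory.volume 0 1 :=
      (hfcont w).intervalIntegrable 0 1
    have h := ContinuousLinearMap.intervalIntegral_comp_comm Complex.reCLM hint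
    simpa using h.symm
  -- pointwise strict inequality on (0,1)
  have hpt : ∀ v ∈ Set.Ioo (0:ℝ) 1, (f (s₃ : ℂ) v).re < (f z v).re := by
    rintro v ⟨hv0, hv1⟩
    set ρ : ℝ := Real.exp (-(s₁ + v * (s₂ - s₁)) * τ) - Real.exp (-s₂ * τ) with hρdef
    have hρ : ρ < 0 := by
      rw [hρdef, sub_neg]
      apply Real.exp_lt_exp.mpr
      nlinarith [mul_pos (mul_pos (sub_pos.mpr hv1) (sub_pos.mpr h12)) hτ]
    have hρc : (ρ : ℂ) = Complex.exp (-((s₁ : ℂ) + (v : ℂ) * ((s₂ : ℂ) - s₁)) * τ) -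
        Complex.exp (-(s₂ : ℂ) * τ) := by
      rw [hρdef]
      push_cast
      ring_nf
    have prod : ∀ w : ℂ, f w v = (ρ : ℂ) * Complex.exp (-(v : ℂ) * (w - s₂) * τ) := by
      intro w
      simp only [hf]
      rw [hρc, sub_mul, ← Complex.exp_add, ← Complex.exp_add,
        show -((s₁ : ℂ) + (v : ℂ) * ((s₂ : ℂ) - s₁)) * τ + -(v : ℂ) * (w - s₂) * τ
          = -((s₁ : ℂ) + (v : ℂ) * (w - s₁)) * τ by ring,
        show -(s₂ : ℂ) * τ + -(v : ℂ) * (w - s₂) * τ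
          = -((s₂ : ℂ) + (v : ℂ) * (w - s₂)) * τ by ring]
    have hre3 : (f (s₃ : ℂ) v).re = ρ * Real.exp (-(v * (s₃ - s₂) * τ)) := by
      rw [prod,
        show -(v : ℂ) * ((s₃ : ℂ) - (s₂ : ℂ)) * (τ : ℂ) = ((-(v * (s₃ - s₂) * τ) : ℝ) : ℂ) by
          push_cast; ring,
        Complex.re_ofReal_mul, Complex.exp_ofReal_re]
    have hrez : (f z v).re = ρ * (Complex.exp (-(v : ℂ) * (z - s₂) * τ)).re := by
      rw [prod, Complex.re_ofReal_mul]
    have hEle : (Complex.exp (-(v : ℂ) * (z - s₂) * τ)).re ≤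
        Real.exp (-(v * τ) * (z.re - s₂)) := by
      refine (Complex.re_le_norm _).trans ?_
      rw [Complex.norm_exp]
      apply le_of_eq
      congr 1
      rw [show -(v : ℂ) * (z - (s₂ : ℂ)) * (τ : ℂ) = ((-(v * τ) : ℝ) : ℂ) * (z - s₂) by
          push_cast; ring,
        Complex.re_ofReal_mul, Complex.sub_re, Complex.ofReal_re]
    have hexp : Real.exp (-(v * τ) * (z.re - s₂)) < Real.exp (-(v * (s₃ - s₂) * τ)) := by
      apply Real.exp_lt_exp.mpr
      nlinarith [mul_pos (mul_pos hv0 hτ) (sub_pos.mpr (show s₃ < z.re by linarith))]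
    calc (f (s₃ : ℂ) v).re = ρ * Real.exp (-(v * (s₃ - s₂) * τ)) := hre3
      _ < ρ * Real.exp (-(v * τ) * (z.re - s₂)) := mul_lt_mul_of_neg_left hexp hρ
      _ ≤ ρ * (Complex.exp (-(v : ℂ) * (z - s₂) * τ)).re :=
          mul_le_mul_of_nonpos_left hEle hρ.le
      _ = (f z v).re := hrez.symm
  -- strict integral inequality contradicts equality
  have hpos : 0 < ∫ v in (0:ℝ)..1, ((f z v).re - (f (s₃ : ℂ) v).re) := by
    apply intervalIntegral.intervalIntegral_pos_of_pos_on
    · exact (((Complex.continuous_re.comp (hfcont z)).sub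
        (Complex.continuous_re.comp (hfcont _))).intervalIntegrable 0 1)
    · exact fun v hv => sub_pos.mpr (hpt v hv)
    · exact one_pos
  have hint1 : IntervalIntegrable (fun v : ℝ => (f z v).re) MeasureTheory.volume 0 1 :=
    (Complex.continuous_re.comp (hfcont z)).intervalIntegrable 0 1
  have hint2 : IntervalIntegrable (fun v : ℝ => (f (s₃ : ℂ) v).re) MeasureTheory.volume 0 1 :=
    (Complex.continuous_re.comp (hfcont _)).intervalIntegrable 0 1
  rw [intervalIntegral.integral_sub hint1 hint2, ← hreint z, ← hreint (s₃ : ℂ), hIeq] at hpos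
  simp at hpos
end

section
/- Let n ≥ 1 be an integer, τ > 0 a real number, and a₀,…,a_{n−1}, b₀ real coefficients, and let Δ(s) = s^n + Σ_{k=0}^{n−1} a_k s^k + b₀ e^{−sτ}. If s₁ > s₂ > ⋯ > s_{n+1} are n + 1 distinct real numbers with Δ(s_j) = 0 for all 1 ≤ j ≤ n + 1, then s₁ is a dominant root of Δ: every complex root s of Δ satisfies Re s ≤ s₁. -/
/-!
Write `Δ = P + b₀ E` with `P` monic of degree `n` and `E z = exp (-z τ)`. If `Δ` vanished at
some `s` with `Re s > r 0`, then `s` is not a node and the `(n + 1)`-st divided difference of `Δ`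
at `r 0, …, r n, s` would vanish. So does that of `P`, whose degree is only `n`, and `b₀ ≠ 0`
because `P` has at most `n` roots; hence the divided difference of `E` vanishes. Integrating
repeatedly writes it as `±∫₀^τ m(u) e^{-us} du` with a kernel `m > 0` on `[0, τ)`. This integral
is not zero once `Re s > r n`: for real `s` it is positive, and otherwise, after one Fubini swap,
its imaginary part is a positive average of damped sine integrals `∫₀^v e^{-βu} sin (y u) du`
with `β > 0`, which are nonzero with the sign of `y`.
-/

open Set Polynomial intervalIntegral

/-- `divDiff f x k z = f[x 0, …, x (k - 1), z]`; it has its usual meaning only for pairwise distinct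
points, elsewhere division by zero gives junk. -/
def divDiff {K : Type*} [Field K] (f : K → K) (x : ℕ → K) : ℕ → K → K
  | 0, z => f z
  | k + 1, z => (divDiff f x k z - divDiff f x k (x k)) / (z - x k)

theorem ne_of_injOn_Iio {α : Type*} {x : ℕ → α} {k : ℕ} (hx : InjOn x (Iio (k + 1))) {j : ℕ}
    (hj : j < k) : x k ≠ x j :=
  hx.ne (by simp) (by simp; omega) hj.ne'

section DivDiff

variable {K : Type*} [Field K] {x : ℕ → K}

theorem divDiff_add (f g : K → K) (k : ℕ) (z : K) :
    divDiff (fun z => f z + g z) x k z = divDiff f x k z + divDiff g x k z := by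
  induction k generalizing z with
  | zero => rfl
  | succ k ih => simp only [divDiff, ih]; ring

theorem divDiff_const_mul (c : K) (f : K → K) (k : ℕ) (z : K) :
    divDiff (fun z => c * f z) x k z = c * divDiff f x k z := by
  induction k generalizing z with
  | zero => rfl
  | succ k ih => simp only [divDiff, ih]; ring

theorem eq_divDiff_mul_prod {f : K → K} {k : ℕ} (hx : InjOn x (Iio k))
    (hf : ∀ j < k, f (x j) = 0) {z : K} (hz : ∀ j < k, z ≠ x j) :
    f z = divDiff f x k z * ∏ j ∈ Finset.range k, (z - x j) := by
  induction k generalizing z with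
  | zero => simp [divDiff]
  | succ k ih =>
    have hx' := hx.mono (Iio_subset_Iio k.le_succ)
    have hf' : ∀ j < k, f (x j) = 0 := fun j hj => hf j (by omega)
    have hxk : divDiff f x k (x k) = 0 := by
      have h := ih hx' hf' fun j hj => ne_of_injOn_Iio hx hj
      rw [hf k k.lt_succ_self, eq_comm, mul_eq_zero] at h
      exact h.resolve_right <| Finset.prod_ne_zero_iff.2 fun j hj =>
        sub_ne_zero.2 (ne_of_injOn_Iio hx (Finset.mem_range.1 hj))
    rw [Finset.prod_range_succ, divDiff, hxk, sub_zero, ih hx' hf' fun j hj => hz j (by omega)]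
    field_simp [sub_ne_zero.2 (hz k k.lt_succ_self)]

theorem exists_divDiff_eval_eq (p : K[X]) {k : ℕ} (hx : InjOn x (Iio k)) :
    ∃ q : K[X], q.natDegree ≤ p.natDegree - k ∧
      ∀ z, (∀ j < k, z ≠ x j) → divDiff (fun z => p.eval z) x k z = q.eval z := by
  induction k with
  | zero => exact ⟨p, by simp, fun z _ => rfl⟩
  | succ k ih =>
    obtain ⟨q, hdeg, hq⟩ := ih (hx.mono (Iio_subset_Iio k.le_succ))
    refine ⟨(q - C (q.eval (x k))) /ₘ (X - C (x k)), ?_, fun z hz => ?_⟩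
    · rw [natDegree_divByMonic _ (monic_X_sub_C _), natDegree_sub_C, natDegree_X_sub_C]
      omega
    · have hmul : (X - C (x k)) * ((q - C (q.eval (x k))) /ₘ (X - C (x k)))
          = q - C (q.eval (x k)) := mul_divByMonic_eq_iff_isRoot.2 (by simp)
      rw [divDiff, hq z fun j hj => hz j (by omega), hq (x k) fun j hj => ne_of_injOn_Iio hx hj,
        div_eq_iff (sub_ne_zero.2 (hz k k.lt_succ_self))]
      simpa [mul_comm] using (congrArg (eval z) hmul).symm

theorem divDiff_eval_eq_zero (p : K[X]) {k : ℕ} (hk : p.natDegree < k) (hx : InjOn x (Iio k))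
    {z : K} (hz : ∀ j < k, z ≠ x j) : divDiff (fun z => p.eval z) x k z = 0 := by
  obtain ⟨d, rfl⟩ : ∃ d, k = d + 1 := ⟨k - 1, by omega⟩
  obtain ⟨q, hdeg, hq⟩ := exists_divDiff_eval_eq p (hx.mono (Iio_subset_Iio d.le_succ))
  rw [eq_C_of_natDegree_le_zero (hdeg.trans (by omega))] at hq
  rw [divDiff, hq z fun j hj => hz j (by omega), hq (x d) fun j hj => ne_of_injOn_Iio hx hj,
    eval_C, eval_C, sub_self, zero_div]

theorem divDiff_eq_zero_of_eval_add_eq_zero (p : K[X]) (f : K → K) {k : ℕ} (hk : p.natDegree < k)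
    (hx : InjOn x (Iio k)) (hroots : ∀ j < k, p.eval (x j) + f (x j) = 0) {z : K}
    (hz : ∀ j < k, z ≠ x j) (hfz : p.eval z + f z = 0) : divDiff f x k z = 0 := by
  have h := eq_divDiff_mul_prod (f := fun z => p.eval z + f z) hx hroots hz
  rwa [hfz, eq_comm, mul_eq_zero, or_iff_left (Finset.prod_ne_zero_iff.2 fun j hj =>
    sub_ne_zero.2 (hz j (Finset.mem_range.1 hj))), divDiff_add, divDiff_eval_eq_zero p hk hx hz,
    zero_add] at h

end DivDiff

theorem integral_exp_mul_sin_pos {β y v : ℝ} (hβ : 0 < β) (hy : 0 < y) (hv : 0 < v) :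
    0 < ∫ u in (0 : ℝ)..v, Real.exp (-β * u) * Real.sin (y * u) := by
  have hc : 0 < β ^ 2 + y ^ 2 := by positivity
  have hderiv : ∀ u, HasDerivAt
      (fun u => -(Real.exp (-β * u) * (y * Real.cos (y * u) + β * Real.sin (y * u))) /
        (β ^ 2 + y ^ 2))
      (Real.exp (-β * u) * Real.sin (y * u)) u := by
    intro u
    have hl : ∀ c : ℝ, HasDerivAt (fun u : ℝ => c * u) c u := fun c => by
      simpa using (hasDerivAt_id u).const_mul c
    refine (((hl (-β)).exp.mul (((hl y).cos.const_mul y).add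
      ((hl y).sin.const_mul β))).neg.div_const (β ^ 2 + y ^ 2)).congr_deriv ?_
    simp only [Pi.add_apply]
    field_simp
    ring
  rw [integral_eq_sub_of_hasDerivAt (fun u _ => hderiv u) <|
    (by fun_prop : Continuous fun u => Real.exp (-β * u) * Real.sin (y * u)).intervalIntegrable _ _]
  have hexp : Real.exp (-β * v) * (1 + β * v) < 1 := by
    have h := Real.add_one_lt_exp (mul_pos hβ hv).ne'
    calc Real.exp (-β * v) * (1 + β * v) < Real.exp (-β * v) * Real.exp (β * v) := by
          gcongr; linarith
      _ = 1 := by rw [← Real.exp_add]; simp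
  -- `sin θ ≤ θ` compares the oscillating term with the first-order expansion of `exp (β v)`
  have hbound : y * Real.cos (y * v) + β * Real.sin (y * v) ≤ y * (1 + β * v) := by
    nlinarith [Real.cos_le_one (y * v), Real.sin_le (mul_pos hy hv).le]
  have key : Real.exp (-β * v) * (y * Real.cos (y * v) + β * Real.sin (y * v)) < y :=
    calc _ ≤ Real.exp (-β * v) * (y * (1 + β * v)) := by gcongr
      _ = y * (Real.exp (-β * v) * (1 + β * v)) := by ring
      _ < y := mul_lt_of_lt_one_right hy hexp
  simp only [mul_zero, Real.exp_zero, Real.cos_zero, Real.sin_zero]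
  rw [← sub_div]
  apply div_pos _ hc
  linarith

open MeasureTheory in
theorem intervalIntegral_triangle_swap {E : Type*} [NormedAddCommGroup E] [NormedSpace ℝ E]
    (f : ℝ → ℝ → E) (hf : Continuous fun p : ℝ × ℝ => f p.1 p.2) {T : ℝ} (hT : 0 ≤ T) :
    ∫ v in (0 : ℝ)..T, ∫ u in (0 : ℝ)..v, f u v = ∫ u in (0 : ℝ)..T, ∫ v in u..T, f u v := by
  set g : ℝ → ℝ → E := fun u v => indicator {p : ℝ × ℝ | p.1 ≤ p.2} (fun p => f p.1 p.2) (u, v)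
  have hint : Integrable (Function.uncurry fun v u => g u v)
      ((volume.restrict (Ioc (0 : ℝ) T)).prod (volume.restrict (Ioc (0 : ℝ) T))) := by
    rw [Measure.prod_restrict]
    refine Integrable.indicator ?_ (isClosed_le continuous_snd continuous_fst).measurableSet
    exact ((hf.comp continuous_swap).continuousOn.integrableOn_compact
      (isCompact_Icc.prod isCompact_Icc)).mono_set
      (prod_mono Ioc_subset_Icc_self Ioc_subset_Icc_self)
  have hL : ∫ v in (0 : ℝ)..T, ∫ u in (0 : ℝ)..v, f u v
      = ∫ v in Ioc (0 : ℝ) T, ∫ u in Ioc (0 : ℝ) T, g u v := by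
    rw [integral_of_le hT]
    refine setIntegral_congr_fun measurableSet_Ioc fun v hv => ?_
    have h : (fun u => g u v) = indicator (Iic v) (fun u => f u v) := by
      ext u; by_cases h : u ≤ v <;> simp [g, indicator_apply, h]
    simp only [h, setIntegral_indicator measurableSet_Iic, Ioc_inter_Iic, min_eq_right hv.2,
      integral_of_le hv.1.le]
  have hR : ∫ u in (0 : ℝ)..T, ∫ v in u..T, f u v
      = ∫ u in Ioc (0 : ℝ) T, ∫ v in Ioc (0 : ℝ) T, g u v := by
    rw [integral_of_le hT]
    refine setIntegral_congr_fun measurableSet_Ioc fun u hu => ?_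
    have h : (fun v => g u v) = indicator (Ici u) (fun v => f u v) := by
      ext v; by_cases h : u ≤ v <;> simp [g, indicator_apply, h]
    have hIcc : Ioc (0 : ℝ) T ∩ Ici u = Icc u T := by
      ext w
      simp only [mem_inter_iff, mem_Ioc, mem_Ici, mem_Icc]
      grind [hu.1]
    simp only [h, setIntegral_indicator measurableSet_Ici, hIcc, integral_Icc_eq_integral_Ioc,
      integral_of_le hu.2]
  rw [hL, hR, integral_integral_swap hint]

theorem integral_mul_cexp_mul (w : ℂ) (v : ℝ) :
    ∫ u in (0 : ℝ)..v, w * Complex.exp (w * u) = Complex.exp (w * v) - 1 := by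
  have hderiv : ∀ u : ℝ,
      HasDerivAt (fun u : ℝ => Complex.exp (w * u)) (w * Complex.exp (w * u)) u := fun u => by
    simpa [mul_comm] using ((hasDerivAt_id u).ofReal_comp.const_mul w).cexp
  rw [integral_eq_sub_of_hasDerivAt (fun u _ => hderiv u)
    ((by fun_prop : Continuous fun u : ℝ => w * Complex.exp (w * u)).intervalIntegrable _ _)]
  simp

/-- The kernel in the integral representation `divDiff_cexp_eq_integral` of the divided differences
of `z ↦ exp (-z τ)` at `ρ 0, …, ρ k`. -/
noncomputable def expKernel (τ : ℝ) (ρ : ℕ → ℝ) : ℕ → ℝ → ℝ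
  | 0, u => Real.exp ((u - τ) * ρ 0)
  | k + 1, u => ∫ v in u..τ, expKernel τ ρ k v * Real.exp ((u - v) * ρ (k + 1))

section ExpKernel

variable {τ : ℝ} {ρ : ℕ → ℝ}

@[fun_prop]
theorem continuous_expKernel (k : ℕ) : Continuous (expKernel τ ρ k) := by
  induction k with
  | zero => exact (continuous_id.sub continuous_const).mul continuous_const |>.rexp
  | succ k ih =>
    show Continuous fun u => ∫ v in u..τ, expKernel τ ρ k v * Real.exp ((u - v) * ρ (k + 1))
    simp_rw [integral_symm τ]
    exact (continuous_parametric_intervalIntegral_of_continuous (by fun_prop) continuous_id).neg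

theorem expKernel_pos (k : ℕ) {u : ℝ} (hu : u < τ) : 0 < expKernel τ ρ k u := by
  induction k generalizing u with
  | zero => exact Real.exp_pos _
  | succ k ih =>
    refine intervalIntegral_pos_of_pos_on ?_ (fun v hv => mul_pos (ih hv.2) (Real.exp_pos _)) hu
    exact ((continuous_expKernel k).mul (by fun_prop)).intervalIntegrable _ _

theorem integral_expKernel_succ_smul {E : Type*} [NormedAddCommGroup E] [NormedSpace ℝ E]
    [CompleteSpace E] (hτ : 0 ≤ τ) (k : ℕ) {g : ℝ → E} (hg : Continuous g) :
    ∫ u in (0 : ℝ)..τ, expKernel τ ρ (k + 1) u • g u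
      = ∫ v in (0 : ℝ)..τ, expKernel τ ρ k v •
          ∫ u in (0 : ℝ)..v, Real.exp ((u - v) * ρ (k + 1)) • g u := by
  have hF : Continuous fun p : ℝ × ℝ =>
      (expKernel τ ρ k p.2 * Real.exp ((p.1 - p.2) * ρ (k + 1))) • g p.1 := by
    fun_prop
  calc ∫ u in (0 : ℝ)..τ, expKernel τ ρ (k + 1) u • g u
      = ∫ u in (0 : ℝ)..τ, ∫ v in u..τ,
          (expKernel τ ρ k v * Real.exp ((u - v) * ρ (k + 1))) • g u := by
        simp only [expKernel, intervalIntegral.integral_smul_const]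
    _ = ∫ v in (0 : ℝ)..τ, ∫ u in (0 : ℝ)..v,
          (expKernel τ ρ k v * Real.exp ((u - v) * ρ (k + 1))) • g u :=
        (intervalIntegral_triangle_swap _ hF hτ).symm
    _ = _ := by simp only [← integral_smul, smul_smul]

theorem sub_mul_integral_expKernel_zero (z : ℂ) :
    (ρ 0 - z) * ∫ u in (0 : ℝ)..τ, (expKernel τ ρ 0 u : ℂ) * Complex.exp (-u * z)
      = Complex.exp (-z * τ) - Complex.exp (-ρ 0 * τ) := by
  have h : ∀ u : ℝ, (ρ 0 - z) * ((expKernel τ ρ 0 u : ℂ) * Complex.exp (-u * z))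
      = Complex.exp (-τ * ρ 0) * ((ρ 0 - z) * Complex.exp ((ρ 0 - z) * u)) := fun u => by
    rw [expKernel, Complex.ofReal_exp]
    simp only [mul_left_comm (Complex.exp _) (_ - z), ← Complex.exp_add]
    congr 2
    push_cast
    ring
  rw [← integral_const_mul, integral_congr fun u _ => h u, integral_const_mul,
    integral_mul_cexp_mul, mul_sub, ← Complex.exp_add, mul_one]
  congr 2 <;> ring

theorem sub_mul_integral_expKernel_succ (hτ : 0 ≤ τ) (k : ℕ) (z : ℂ) :
    (ρ (k + 1) - z) * ∫ u in (0 : ℝ)..τ, (expKernel τ ρ (k + 1) u : ℂ) * Complex.exp (-u * z)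
      = (∫ u in (0 : ℝ)..τ, (expKernel τ ρ k u : ℂ) * Complex.exp (-u * z))
        - ∫ u in (0 : ℝ)..τ, (expKernel τ ρ k u : ℂ) * Complex.exp (-u * ρ (k + 1)) := by
  have hfub := integral_expKernel_succ_smul (ρ := ρ) hτ k
    (g := fun u : ℝ => (ρ (k + 1) - z) * Complex.exp (-u * z)) (by fun_prop)
  set c := ρ (k + 1)
  have hinner : ∀ v : ℝ,
      ∫ u in (0 : ℝ)..v, Real.exp ((u - v) * c) • ((c - z) * Complex.exp (-u * z))
        = Complex.exp (-v * z) - Complex.exp (-v * c) := fun v => by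
    have h : ∀ u : ℝ, Real.exp ((u - v) * c) • ((c - z) * Complex.exp (-u * z))
        = Complex.exp (-v * c) * ((c - z) * Complex.exp ((c - z) * u)) := fun u => by
      rw [Complex.real_smul, Complex.ofReal_exp]
      simp only [mul_left_comm (Complex.exp _) (_ - z), ← Complex.exp_add]
      congr 2
      push_cast
      ring
    rw [integral_congr fun u _ => h u, integral_const_mul, integral_mul_cexp_mul, mul_sub,
      ← Complex.exp_add, mul_one]
    congr 2; ring
  simp_rw [hinner, Complex.real_smul, mul_sub] at hfub
  rw [← integral_sub, ← integral_const_mul, ← hfub]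
  · exact integral_congr fun u _ => mul_left_comm _ _ _
  all_goals exact (by fun_prop : Continuous _).intervalIntegrable _ _

theorem divDiff_cexp_eq_integral (hτ : 0 ≤ τ) {k : ℕ} (hρ : InjOn ρ (Iio (k + 1))) {z : ℂ}
    (hz : ∀ j < k + 1, z ≠ ρ j) :
    divDiff (fun z => Complex.exp (-z * τ)) (fun j => (ρ j : ℂ)) (k + 1) z
      = (-1) ^ (k + 1) * ∫ u in (0 : ℝ)..τ, (expKernel τ ρ k u : ℂ) * Complex.exp (-u * z) := by
  induction k generalizing z with
  | zero =>
    simp only [divDiff]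
    rw [div_eq_iff (sub_ne_zero.2 (hz 0 zero_lt_one)), ← sub_mul_integral_expKernel_zero]
    ring
  | succ k ih =>
    have hρ' := hρ.mono (Iio_subset_Iio (k + 1).le_succ)
    rw [divDiff, ih hρ' fun j hj => hz j (by omega),
      ih hρ' fun j hj => Complex.ofReal_injective.ne (ne_of_injOn_Iio hρ hj),
      div_eq_iff (sub_ne_zero.2 (hz (k + 1) (k + 1).lt_succ_self))]
    linear_combination (-1) ^ k * sub_mul_integral_expKernel_succ hτ k z

theorem integral_expKernel_mul_exp_mul_sin_pos (hτ : 0 < τ) (k : ℕ) {β y : ℝ} (hβ : ρ k < β)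
    (hy : 0 < y) :
    0 < ∫ u in (0 : ℝ)..τ, expKernel τ ρ k u * (Real.exp (-β * u) * Real.sin (y * u)) := by
  cases k with
  | zero =>
    have h : ∀ u : ℝ, expKernel τ ρ 0 u * (Real.exp (-β * u) * Real.sin (y * u))
        = Real.exp (-τ * ρ 0) * (Real.exp (-(β - ρ 0) * u) * Real.sin (y * u)) := fun u => by
      rw [expKernel, ← mul_assoc, ← mul_assoc, ← Real.exp_add, ← Real.exp_add]
      ring_nf
    rw [integral_congr fun u _ => h u, integral_const_mul]
    exact mul_pos (Real.exp_pos _) (integral_exp_mul_sin_pos (sub_pos.2 hβ) hy hτ)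
  | succ k =>
    have hfub := integral_expKernel_succ_smul (ρ := ρ) hτ.le k
      (g := fun u => Real.exp (-β * u) * Real.sin (y * u)) (by fun_prop)
    set c := ρ (k + 1)
    simp only [smul_eq_mul] at hfub
    rw [hfub]
    have hinner : ∀ v : ℝ,
        ∫ u in (0 : ℝ)..v, Real.exp ((u - v) * c) * (Real.exp (-β * u) * Real.sin (y * u))
          = Real.exp (-v * c) * ∫ u in (0 : ℝ)..v, Real.exp (-(β - c) * u) * Real.sin (y * u) :=
      fun v => by
      rw [← integral_const_mul]
      refine integral_congr fun u _ => ?_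
      simp only [← mul_assoc, ← Real.exp_add]
      ring_nf
    simp only [hinner]
    refine intervalIntegral_pos_of_pos_on ?_ (fun v hv => ?_) hτ
    · refine Continuous.intervalIntegrable ?_ _ _
      have : Continuous fun v => ∫ u in (0 : ℝ)..v, Real.exp (-(β - c) * u) * Real.sin (y * u) :=
        continuous_primitive (fun _ _ => (by fun_prop : Continuous _).intervalIntegrable _ _) 0
      fun_prop
    · exact mul_pos (expKernel_pos k hv.2) (mul_pos (Real.exp_pos _)
        (integral_exp_mul_sin_pos (sub_pos.2 hβ) hy hv.1))

theorem integral_expKernel_mul_cexp_ne_zero (hτ : 0 < τ) (k : ℕ) {z : ℂ} (hz : ρ k < z.re) :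
    ∫ u in (0 : ℝ)..τ, (expKernel τ ρ k u : ℂ) * Complex.exp (-u * z) ≠ 0 := by
  intro h
  have hint : IntervalIntegrable (fun u : ℝ => (expKernel τ ρ k u : ℂ) * Complex.exp (-u * z))
      MeasureTheory.volume 0 τ :=
    (by fun_prop : Continuous _).intervalIntegrable _ _
  rcases eq_or_ne z.im 0 with him | him
  · have hre : ∫ u in (0 : ℝ)..τ, expKernel τ ρ k u * Real.exp (-(u * z.re)) = 0 := by
      simpa [Complex.exp_re, him] using (intervalIntegral_re hint).trans (congrArg _ h)
    exact (intervalIntegral_pos_of_pos_on ((by fun_prop : Continuous _).intervalIntegrable _ _)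
      (fun u hu => mul_pos (expKernel_pos k hu.2) (Real.exp_pos _)) hτ).ne' hre
  · have hS : ∫ u in (0 : ℝ)..τ, expKernel τ ρ k u * (Real.exp (-z.re * u) * Real.sin (z.im * u))
        = 0 := by
      simpa [Complex.exp_im, mul_comm z.re, mul_comm z.im] using
        (intervalIntegral_im hint).trans (congrArg _ h)
    rcases him.lt_or_gt with hneg | hpos
    · have h := integral_expKernel_mul_exp_mul_sin_pos hτ k hz (neg_pos.2 hneg)
      simp only [neg_mul z.im, Real.sin_neg, mul_neg, integral_neg, hS, neg_zero,
        lt_irrefl] at h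
    · exact (integral_expKernel_mul_exp_mul_sin_pos hτ k hz hpos).ne' hS

end ExpKernel

theorem crrid_dominancy_m0_general (n : ℕ) (τ : ℝ) (hτ : 0 < τ)
    (a : Fin n → ℝ) (b₀ : ℝ) (r : Fin (n + 1) → ℝ) (hr : StrictAnti r)
    (hroots : ∀ j : Fin (n + 1),
      (r j : ℂ) ^ n + (∑ k : Fin n, (a k : ℂ) * (r j : ℂ) ^ (k : ℕ)) +
        (b₀ : ℂ) * Complex.exp (-(r j : ℂ) * τ) = 0) :
    ∀ s : ℂ, s ^ n + (∑ k : Fin n, (a k : ℂ) * s ^ (k : ℕ)) +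
        (b₀ : ℂ) * Complex.exp (-s * τ) = 0 →
      s.re ≤ r 0 := by
  intro s hs
  by_contra! hlt
  set P : ℂ[X] := X ^ n + ∑ k : Fin n, C (a k : ℂ) * X ^ (k : ℕ)
  have hP : ∀ z, P.eval z = z ^ n + ∑ k : Fin n, (a k : ℂ) * z ^ (k : ℕ) := fun z => by
    simp [P, eval_finsetSum]
  have hP_deg : P.natDegree = n := by
    rw [natDegree_add_eq_left_of_degree_lt (by simpa using degree_sum_fin_lt _), natDegree_X_pow]
  have hb₀ : b₀ ≠ 0 := by
    rintro rfl
    refine (monic_X_pow_add (degree_sum_fin_lt _)).ne_zero <|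
      eq_zero_of_natDegree_lt_card_of_eval_eq_zero P
        (Complex.ofReal_injective.comp hr.injective) (fun j => ?_) (by simp [hP_deg])
    simpa [hP] using hroots j
  -- the roots `r 0, …, r n` as a sequence of nodes, continued by repeating `r n`
  set ρ : ℕ → ℝ := fun k => r (Fin.clamp k n)
  have hρ_le : ∀ k, ρ k ≤ r 0 := fun k => hr.antitone (Fin.zero_le _)
  have hρ_inj : InjOn ρ (Iio (n + 1)) := fun i hi j hj h => by
    simpa [Fin.clamp, Nat.lt_succ_iff.1 hi, Nat.lt_succ_iff.1 hj] using hr.injective h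
  have hs_ne : ∀ j, s ≠ ρ j := fun j h => by
    have := congrArg Complex.re h
    simp only [Complex.ofReal_re] at this
    linarith [hρ_le j]
  have hdd := divDiff_eq_zero_of_eval_add_eq_zero P (fun z => b₀ * Complex.exp (-z * τ))
    (x := fun j => (ρ j : ℂ)) (by omega) (Complex.ofReal_injective.comp_injOn hρ_inj)
    (fun j _ => by simpa [hP] using hroots _) (fun j _ => hs_ne j) (by simpa [hP] using hs)
  rw [divDiff_const_mul, divDiff_cexp_eq_integral hτ.le hρ_inj fun j _ => hs_ne j] at hdd
  exact integral_expKernel_mul_cexp_ne_zero hτ n ((hρ_le n).trans_lt hlt) (by simpa [hb₀] using hdd)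

/-- CRRID property for `m = 0` and arbitrary `n ≥ 1`: if
`Δ(s) = s^n + Σ_{k<n} a_k s^k + b₀ e^{-sτ}` (with `τ > 0`) has `n + 1` real
roots `r 0 > r 1 > ⋯ > r n`, then the largest one, `r 0`, is dominant: every
complex root `s` of `Δ` satisfies `Re s ≤ r 0`. -/
theorem crrid_dominancy_m0 (n : ℕ) (hn : 1 ≤ n) (τ : ℝ) (hτ : 0 < τ)
    (a : Fin n → ℝ) (b₀ : ℝ) (r : Fin (n + 1) → ℝ) (hr : StrictAnti r)
    (hroots : ∀ j : Fin (n + 1),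
      (r j : ℂ) ^ n + (∑ k : Fin n, (a k : ℂ) * (r j : ℂ) ^ (k : ℕ)) +
        (b₀ : ℂ) * Complex.exp (-(r j : ℂ) * τ) = 0) :
    ∀ s : ℂ, s ^ n + (∑ k : Fin n, (a k : ℂ) * s ^ (k : ℕ)) +
        (b₀ : ℂ) * Complex.exp (-s * τ) = 0 →
      s.re ≤ r 0 :=
  crrid_dominancy_m0_general n τ hτ a b₀ r hr hroots
end

section
/- Let ω > 0 be a real number. A pair (s₀, τ) ∈ ℝ × (0, +∞) belongs to the admissibility region of the oscillator, i.e., there exists a real number b₀ such that s₀ is a root of multiplicity at least 2 of Δ(s) = s² + ω² + b₀ e^{−sτ}, if and only if 2 s₀ + τ (s₀² + ω²) = 0. Consequently, for every s₀ < 0 there is exactly one admissible delay, namely τ = −2 s₀ / (s₀² + ω²), and no pair (s₀, τ) with s₀ ≥ 0 is admissible. -/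
open Complex in
theorem deriv_sq_add_const_add_mul_exp (a b τ z : ℂ) :
    deriv (fun s : ℂ => s ^ 2 + a + b * exp (-s * τ)) z = 2 * z - b * τ * exp (-z * τ) := by
  have hexp : HasDerivAt (fun s : ℂ => exp (-s * τ)) (exp (-z * τ) * -τ) z :=
    (hasDerivAt_exp _).comp z (by simpa using (hasDerivAt_neg z).mul_const τ)
  refine ((((hasDerivAt_pow 2 z).add_const a).add (hexp.const_mul b)).congr_deriv ?_).deriv
  ring

/-- Eliminating `b * exp (-s * τ)` between `Δ(s) = 0` and `Δ'(s) = 0`; conversely that product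
can be prescribed freely because the exponential never vanishes. -/
theorem exists_double_root_iff (a s τ : ℝ) :
    (∃ b : ℝ, s ^ 2 + a + b * Real.exp (-s * τ) = 0 ∧ 2 * s - b * τ * Real.exp (-s * τ) = 0) ↔
      2 * s + τ * (s ^ 2 + a) = 0 := by
  constructor
  · rintro ⟨b, hΔ, hΔ'⟩
    linear_combination τ * hΔ + hΔ'
  · intro h
    have hexp : Real.exp (s * τ) * Real.exp (-s * τ) = 1 := by
      rw [← Real.exp_add]; simp
    refine ⟨-(s ^ 2 + a) * Real.exp (s * τ), ?_, ?_⟩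
    · linear_combination (-(s ^ 2 + a)) * hexp
    · linear_combination h + τ * (s ^ 2 + a) * hexp

theorem oscillator_double_root_iff (a s τ : ℝ) :
    (∃ b : ℝ,
        (fun z : ℂ => z ^ 2 + (a : ℂ) + (b : ℂ) * Complex.exp (-z * τ)) (s : ℂ) = 0 ∧
        deriv (fun z : ℂ => z ^ 2 + (a : ℂ) + (b : ℂ) * Complex.exp (-z * τ)) (s : ℂ) = 0) ↔
      2 * s + τ * (s ^ 2 + a) = 0 := by
  have hexp : Complex.exp (-(s : ℂ) * τ) = (Real.exp (-s * τ) : ℂ) := by push_cast; rfl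
  simp only [deriv_sq_add_const_add_mul_exp, hexp]
  norm_cast
  exact exists_double_root_iff a s τ

/-- Admissibility region of the controlled oscillator
`Δ(s) = s² + ω² + b₀ e^{-sτ}` (with `ω > 0`): a pair `(s₀, τ)` with `τ > 0` is
admissible — i.e. there is `b₀ ∈ ℝ` making `s₀` a root of multiplicity at least
`2` — iff `2 s₀ + τ (s₀² + ω²) = 0`. Consequently, for every `s₀ < 0` the
unique admissible delay is `τ = -2 s₀ / (s₀² + ω²)`, and no pair with
`s₀ ≥ 0` is admissible. -/
theorem oscillator_admissibility_region (ω : ℝ) (hω : 0 < ω) :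
    (∀ s₀ τ : ℝ, 0 < τ →
      ((∃ b₀ : ℝ,
          (fun s : ℂ => s ^ 2 + (ω : ℂ) ^ 2 + (b₀ : ℂ) * Complex.exp (-s * τ)) (s₀ : ℂ) = 0 ∧
          deriv (fun s : ℂ => s ^ 2 + (ω : ℂ) ^ 2 + (b₀ : ℂ) * Complex.exp (-s * τ)) (s₀ : ℂ) = 0) ↔
        2 * s₀ + τ * (s₀ ^ 2 + ω ^ 2) = 0)) ∧
    (∀ s₀ : ℝ, s₀ < 0 → ∀ τ : ℝ, 0 < τ →
      ((∃ b₀ : ℝ,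
          (fun s : ℂ => s ^ 2 + (ω : ℂ) ^ 2 + (b₀ : ℂ) * Complex.exp (-s * τ)) (s₀ : ℂ) = 0 ∧
          deriv (fun s : ℂ => s ^ 2 + (ω : ℂ) ^ 2 + (b₀ : ℂ) * Complex.exp (-s * τ)) (s₀ : ℂ) = 0) ↔
        τ = -2 * s₀ / (s₀ ^ 2 + ω ^ 2))) ∧
    (∀ s₀ : ℝ, 0 ≤ s₀ → ∀ τ : ℝ, 0 < τ →
      ¬ ∃ b₀ : ℝ,
          (fun s : ℂ => s ^ 2 + (ω : ℂ) ^ 2 + (b₀ : ℂ) * Complex.exp (-s * τ)) (s₀ : ℂ) = 0 ∧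
          deriv (fun s : ℂ => s ^ 2 + (ω : ℂ) ^ 2 + (b₀ : ℂ) * Complex.exp (-s * τ)) (s₀ : ℂ) = 0) := by
  have key (s₀ τ : ℝ) := oscillator_double_root_iff (ω ^ 2) s₀ τ
  push_cast at key
  have hpos (s₀ : ℝ) : 0 < s₀ ^ 2 + ω ^ 2 := by positivity
  refine ⟨fun s₀ τ _ => key s₀ τ, fun s₀ _ τ _ => (key s₀ τ).trans ?_, fun s₀ hs₀ τ hτ h => ?_⟩
  · rw [eq_div_iff (hpos s₀).ne']
    constructor <;> intro <;> linarith
  · have := mul_pos hτ (hpos s₀)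
    linarith [(key s₀ τ).mp h]
end
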